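/- arXiv:1211.6504 — 11 statements merged into one kernel-verified Lean document; each statement's English description precedes it below -/
import Mathlib

section
/- Let X be a normed vector space and D₁, D₂ ⊆ X two convex sets with int(D₁ ∩ D₂) ≠ ∅. Then D₁ ∪ D₂ is strongly star-shaped relative to any u₀ ∈ int(D₁ ∩ D₂), i.e. t·closure(D₁ ∪ D₂) + (1-t)·u₀ ⊆ D₁ ∪ D₂ for all t ∈ [0,1). -/
theorem union_convex_stronglyStarShaped {X : Type*} [NormedAddCommGroup X]
    [NormedSpace ℝ X] (D₁ D₂ : Set X) (h₁ : Convex ℝ D₁) (h₂ : Convex ℝ D₂)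
    (u₀ : X) (hu₀ : u₀ ∈ interior (D₁ ∩ D₂)) :
    ∀ t ∈ Set.Ico (0:ℝ) 1, ∀ u ∈ closure (D₁ ∪ D₂), t • u + (1 - t) • u₀ ∈ D₁ ∪ D₂ := by
  intro t ht u hu
  have hu₀₁ : u₀ ∈ interior D₁ :=
    interior_mono Set.inter_subset_left hu₀
  have hu₀₂ : u₀ ∈ interior D₂ :=
    interior_mono Set.inter_subset_right hu₀
  rw [closure_union] at hu
  rcases hu with hu | hu
  · left
    have := h₁.combo_interior_closure_mem_interior (a := 1 - t) (b := t) hu₀₁ hu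
      (by linarith [ht.2]) ht.1 (by ring)
    rw [add_comm] at this
    exact interior_subset this
  · right
    have := h₂.combo_interior_closure_mem_interior (a := 1 - t) (b := t) hu₀₂ hu
      (by linarith [ht.2]) ht.1 (by ring)
    rw [add_comm] at this
    exact interior_subset this
end

section
/- Let X be a Hausdorff topological vector space, D ⊆ dom f a strongly star-shaped set relative to u₀ ∈ D, f : X → (-∞,∞] ru-usc in D relative to u₀ with inf_D f > -∞. If the lower semicontinuous envelope of f + χ_D equals f on D (i.e. liminf_{D∋v→u} f(v) = f(u) for all u ∈ D), then the lower semicontinuous envelope of f + χ_D equals f̂_{u₀} + χ_{closure D}, where f̂_{u₀}(u) = liminf_{t→1⁻} f(tu+(1-t)u₀). -/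
open Filter Topology
open scoped Classical

/-- The radial uniform modulus `Δ^a_{f,D,u₀}(t)`. -/
noncomputable def ruModulus {X : Type*} [AddCommGroup X] [Module ℝ X]
    (f : X → EReal) (D : Set X) (u₀ : X) (a : ℝ) (t : ℝ) : EReal :=
  ⨆ u ∈ D, (f (t • u + (1 - t) • u₀) - f u) / ((a + |(f u).toReal| : ℝ) : EReal)

/-- `f` is radially uniformly upper semicontinuous in `D` relative to `u₀`. -/
def RuUsc {X : Type*} [AddCommGroup X] [Module ℝ X]
    (f : X → EReal) (D : Set X) (u₀ : X) : Prop :=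
  ∃ a : ℝ, 0 < a ∧ limsup (ruModulus f D u₀ a) (𝓝[<] (1:ℝ)) ≤ 0

/-- The radial extension `f̂_{u₀}(u) = liminf_{t→1⁻} f(tu+(1-t)u₀)`. -/
noncomputable def radialExt {X : Type*} [AddCommGroup X] [Module ℝ X]
    (f : X → EReal) (u₀ u : X) : EReal :=
  liminf (fun t : ℝ => f (t • u + (1 - t) • u₀)) (𝓝[<] (1:ℝ))

/-- The lower semicontinuous envelope `ḡ(u) = liminf_{v→u} g(v)`. -/
noncomputable def lscEnv {X : Type*} [TopologicalSpace X] (f : X → EReal) (u : X) : EReal :=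
  liminf f (𝓝 u)

lemma liminf_map' {α β : Type*} (g : α → EReal) (φ : β → α) (F : Filter β) :
    liminf g (Filter.map φ F) = liminf (g ∘ φ) F := by
  unfold Filter.liminf; rw [Filter.map_map]

/-- Theorem 3.1(i): radial representation on the boundary of a strongly
star-shaped set. -/
theorem lscEnv_penalized_eq_radialExt {X : Type*} [AddCommGroup X] [Module ℝ X]
    [TopologicalSpace X] [T2Space X] [IsTopologicalAddGroup X] [ContinuousSMul ℝ X]
    (f : X → EReal) (hbot : ∀ u, f u ≠ ⊥) (D : Set X) (hD : D ⊆ {u | f u < ⊤})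
    (u₀ : X) (hu₀ : u₀ ∈ D)
    (hstar : ∀ t ∈ Set.Ico (0:ℝ) 1, ∀ u ∈ closure D, t • u + (1 - t) • u₀ ∈ D)
    (hru : RuUsc f D u₀)
    (hinf : ∃ m : ℝ, ∀ u ∈ D, (m : EReal) ≤ f u)
    (hlsc : ∀ u ∈ D, lscEnv (fun v => if v ∈ D then f v else ⊤) u = f u) :
    ∀ u : X, lscEnv (fun v => if v ∈ D then f v else ⊤) u =
      if u ∈ closure D then radialExt f u₀ u else ⊤ := by
  obtain ⟨a, ha, hΔ⟩ := hru
  obtain ⟨m, hm⟩ := hinf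
  set g : X → EReal := fun v => if v ∈ D then f v else ⊤ with hgdef
  have hreal : ∀ v ∈ D, f v = ((f v).toReal : EReal) := fun v hv =>
    (EReal.coe_toReal (hD hv).ne (hbot v)).symm
  have hIoo : Set.Ioo (0:ℝ) 1 ∈ 𝓝[<] (1:ℝ) := Ioo_mem_nhdsLT_of_mem ⟨by norm_num, le_refl 1⟩
  intro u
  by_cases hucl : u ∈ closure D
  · rw [if_pos hucl]
    set φ : ℝ → X := fun t => t • u + (1 - t) • u₀ with hφdef
    have hφcont : Continuous φ := by fun_prop
    have hφ1 : φ 1 = u := by simp [hφdef]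
    have hmap : Tendsto φ (𝓝[<] (1:ℝ)) (𝓝 u) := by
      have h1 : Tendsto φ (𝓝 (1:ℝ)) (𝓝 u) := hφ1 ▸ hφcont.tendsto 1
      exact h1.mono_left nhdsWithin_le_nhds
    have hφD : ∀ᶠ t in 𝓝[<] (1:ℝ), φ t ∈ D := by
      filter_upwards [hIoo] with t ht
      exact hstar t ⟨ht.1.le, ht.2⟩ u hucl
    -- easy direction
    have hle1 : lscEnv g u ≤ radialExt f u₀ u := by
      have h1 : liminf g (𝓝 u) ≤ liminf g (Filter.map φ (𝓝[<] (1:ℝ))) :=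
        liminf_le_liminf_of_le hmap
      rw [liminf_map'] at h1
      have h2 : liminf (g ∘ φ) (𝓝[<] (1:ℝ)) = liminf (fun t => f (φ t)) (𝓝[<] (1:ℝ)) := by
        apply liminf_congr
        filter_upwards [hφD] with t ht
        simp [hgdef, Function.comp, ht]
      rw [h2] at h1
      exact h1
    -- hard direction
    have hge1 : radialExt f u₀ u ≤ lscEnv g u := by
      by_contra hcon
      push_neg at hcon
      obtain ⟨b, hLb, hbR⟩ := EReal.exists_between_coe_real hcon
      -- show radialExt ≤ b, contradiction
      obtain ⟨c, hLc, hcb'⟩ := EReal.exists_between_coe_real hLb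
      have hcb : c < b := by exact_mod_cast hcb'
      set M : ℝ := max |m| |c| with hM
      have hMnn : 0 ≤ M := le_trans (abs_nonneg m) (le_max_left _ _)
      set ε : ℝ := (b - c) / (a + M + 1) with hε
      have haM : 0 < a + M + 1 := by linarith
      have hεpos : 0 < ε := div_pos (by linarith) haM
      -- the filter within S
      set S : Set X := {v | v ∈ D ∧ f v < (c : EReal)} with hS
      have hfreq : ∃ᶠ v in 𝓝 u, v ∈ S := by
        have hLc' : liminf g (𝓝 u) < (c : EReal) := hLc
        have := frequently_lt_of_liminf_lt (by isBoundedDefault) hLc'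
        apply this.mono
        intro v hv
        by_cases hvD : v ∈ D
        · exact ⟨hvD, by simpa [hgdef, hvD] using hv⟩
        · simp [hgdef, hvD] at hv
      have hlne : (𝓝[S] u).NeBot := by
        exact mem_closure_iff_nhdsWithin_neBot.mp (mem_closure_iff_frequently.mpr hfreq)
      -- eventually the modulus is small
      have hΔsmall : ∀ᶠ t in 𝓝[<] (1:ℝ), ruModulus f D u₀ a t < (ε : EReal) := by
        exact eventually_lt_of_limsup_lt (lt_of_le_of_lt hΔ (by exact_mod_cast hεpos))
          (by isBoundedDefault)
      have hkey : ∀ᶠ t in 𝓝[<] (1:ℝ), f (φ t) ≤ (b : EReal) := by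
        filter_upwards [hIoo, hΔsmall] with t ht htΔ
        have htIco : t ∈ Set.Ico (0:ℝ) 1 := ⟨ht.1.le, ht.2⟩
        have hφtD : φ t ∈ D := hstar t htIco u hucl
        set ψ : X → X := fun v => t • v + (1 - t) • u₀ with hψdef
        have hψcont : Continuous ψ := by fun_prop
        have hψu : ψ u = φ t := rfl
        have hψmap : Tendsto ψ (𝓝[S] u) (𝓝 (φ t)) := by
          have := hψcont.tendsto u
          rw [hψu] at this
          exact this.mono_left nhdsWithin_le_nhds
        have hbound : ∀ᶠ v in 𝓝[S] u, g (ψ v) ≤ (b : EReal) := by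
          filter_upwards [self_mem_nhdsWithin] with v hv
          obtain ⟨hvD, hvc⟩ := hv
          have hψvD : ψ v ∈ D := hstar t htIco v (subset_closure hvD)
          set y : ℝ := (f v).toReal with hy
          set x : ℝ := (f (ψ v)).toReal with hx
          have hfv : f v = (y : EReal) := hreal v hvD
          have hfψv : f (ψ v) = (x : EReal) := hreal (ψ v) hψvD
          have hyc : y < c := by rw [hfv] at hvc; exact_mod_cast hvc
          have hmy : m ≤ y := by
            have := hm v hvD; rw [hfv] at this; exact_mod_cast this
          have hyM : |y| ≤ M := by
            rw [abs_le]
            constructor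
            · calc -M ≤ -|m| := by simp [hM, neg_le_neg_iff]
                _ ≤ m := neg_abs_le m
                _ ≤ y := hmy
            · calc y ≤ c := hyc.le
                _ ≤ |c| := le_abs_self c
                _ ≤ M := le_max_right _ _
          -- per-element modulus bound
          have hterm : ((((x - y) / (a + |y|) : ℝ)) : EReal) < (ε : EReal) := by
            have hle : (f (ψ v) - f v) / (((a + |(f v).toReal| : ℝ)) : EReal)
                ≤ ruModulus f D u₀ a t := by
              apply le_trans _ (le_iSup _ v)
              rw [iSup_pos hvD]
            rw [hfv, hfψv] at hle
            simp only [EReal.toReal_coe] at hle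
            have : ((x : EReal) - (y : EReal)) / (((a + |y| : ℝ)) : EReal)
                = (((x - y) / (a + |y|) : ℝ) : EReal) := by
              rw [← EReal.coe_sub, ← EReal.coe_div]
            rw [this] at hle
            calc ((((x - y) / (a + |y|) : ℝ)) : EReal) ≤ ruModulus f D u₀ a t := by
                  exact hle
              _ < (ε : EReal) := htΔ
          have hterm' : (x - y) / (a + |y|) < ε := by exact_mod_cast hterm
          have hay : 0 < a + |y| := by positivity
          have hxb : x ≤ b := by
            have h1 : x - y < ε * (a + |y|) := by
              rwa [div_lt_iff₀ hay] at hterm'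
            have h2 : ε * (a + |y|) ≤ ε * (a + M) :=
              mul_le_mul_of_nonneg_left (by linarith) hεpos.le
            have h3 : ε * (a + M) ≤ b - c := by
              rw [hε, div_mul_eq_mul_div, div_le_iff₀ haM]
              nlinarith
            linarith
          have : g (ψ v) = f (ψ v) := by simp [hgdef, hψvD]
          rw [this, hfψv]
          exact_mod_cast hxb
        have hfφt : f (φ t) = lscEnv g (φ t) := (hlsc (φ t) hφtD).symm
        rw [hfφt]
        calc lscEnv g (φ t) = liminf g (𝓝 (φ t)) := rfl
          _ ≤ liminf g (Filter.map ψ (𝓝[S] u)) := liminf_le_liminf_of_le hψmap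
          _ = liminf (g ∘ ψ) (𝓝[S] u) := liminf_map' _ _ _
          _ ≤ (b : EReal) := liminf_le_of_frequently_le hbound.frequently
      have : radialExt f u₀ u ≤ (b : EReal) :=
        liminf_le_of_frequently_le hkey.frequently
      exact absurd (lt_of_le_of_lt this hbR) (lt_irrefl _)
    exact le_antisymm hle1 hge1
  · rw [if_neg hucl]
    have hev : ∀ᶠ v in 𝓝 u, g v = ⊤ := by
      have hmem : (closure D)ᶜ ∈ 𝓝 u := (isClosed_closure).isOpen_compl.mem_nhds hucl
      filter_upwards [hmem] with v hv
      have : v ∉ D := fun h => hv (subset_closure h)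
      simp [hgdef, this]
    calc lscEnv g u = liminf (fun _ : X => (⊤ : EReal)) (𝓝 u) := liminf_congr hev
      _ = ⊤ := liminf_const ⊤
end

section
/- Let X be a Hausdorff topological vector space, D ⊆ dom f strongly star-shaped relative to u₀ ∈ D, and f : X → (-∞,∞] ru-usc in D relative to u₀ with inf_D f > -∞. Then for every u ∈ closure D, the limit lim_{t→1⁻} f(tu+(1-t)u₀) exists (in (-∞,∞]), i.e. liminf_{t→1⁻} f(tu+(1-t)u₀) = limsup_{t→1⁻} f(tu+(1-t)u₀). -/
open Filter Topology

/-- Theorem 3.1(ii), first part: the radial limit exists on the closure. -/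
theorem radial_limit_exists {X : Type*} [AddCommGroup X] [Module ℝ X]
    [TopologicalSpace X] [T2Space X] [IsTopologicalAddGroup X] [ContinuousSMul ℝ X]
    (f : X → EReal) (hbot : ∀ u, f u ≠ ⊥) (D : Set X) (hD : D ⊆ {u | f u < ⊤})
    (u₀ : X) (hu₀ : u₀ ∈ D)
    (hstar : ∀ t ∈ Set.Ico (0:ℝ) 1, ∀ u ∈ closure D, t • u + (1 - t) • u₀ ∈ D)
    (hru : RuUsc f D u₀)
    (hinf : ∃ m : ℝ, ∀ u ∈ D, (m : EReal) ≤ f u) :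
    ∀ u ∈ closure D,
      liminf (fun t : ℝ => f (t • u + (1 - t) • u₀)) (𝓝[<] (1:ℝ)) =
      limsup (fun t : ℝ => f (t • u + (1 - t) • u₀)) (𝓝[<] (1:ℝ)) := by
  obtain ⟨a, ha, hΔ⟩ := hru
  obtain ⟨m, hm⟩ := hinf
  intro u hu
  set g : ℝ → EReal := fun t => f (t • u + (1 - t) • u₀) with hg
  have hIoo : Set.Ioo (0:ℝ) 1 ∈ 𝓝[<] (1:ℝ) :=
    Ioo_mem_nhdsLT_of_mem ⟨zero_lt_one, le_refl 1⟩
  have hmemD : ∀ t ∈ Set.Ioo (0:ℝ) 1, t • u + (1 - t) • u₀ ∈ D := fun t ht =>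
    hstar t ⟨ht.1.le, ht.2⟩ u hu
  have hglo : ∀ᶠ t in 𝓝[<] (1:ℝ), (m : EReal) ≤ g t := by
    filter_upwards [hIoo] with t ht
    exact hm _ (hmemD t ht)
  set L := liminf g (𝓝[<] (1:ℝ)) with hLdef
  set M := limsup g (𝓝[<] (1:ℝ)) with hMdef
  have hLM : L ≤ M := liminf_le_limsup
  have hmL : (m : EReal) ≤ L := le_liminf_of_le (by isBoundedDefault) hglo
  rcases eq_or_ne L ⊤ with htop | htop
  · exact le_antisymm hLM (htop ▸ le_top)
  -- L is a real number
  have hLbot : L ≠ ⊥ := fun h => by simp [h] at hmL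
  set l : ℝ := L.toReal with hl
  have hLl : L = (l : EReal) := (EReal.coe_toReal htop hLbot).symm
  set C : ℝ := a + |m| + |l| + 1 with hC
  have hCpos : (0:ℝ) < C + 1 := by positivity
  -- key eventual bound
  have key : ∀ ε : ℝ, 0 < ε → ε ≤ 1 → M ≤ ((C * ε + l + ε : ℝ) : EReal) := by
    intro ε hε hε1
    have hΔε : ∀ᶠ t in 𝓝[<] (1:ℝ), ruModulus f D u₀ a t < (ε : EReal) :=
      eventually_lt_of_limsup_lt (lt_of_le_of_lt hΔ (by exact_mod_cast hε))
    obtain ⟨b', hb', hb'sub⟩ := (mem_nhdsLT_iff_exists_Ioo_subset' (by norm_num : (0:ℝ) < 1)).1 hΔε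
    set b : ℝ := max b' 0 with hb
    have hb1 : b < 1 := max_lt hb' zero_lt_one
    have hfreq : ∃ᶠ s in 𝓝[<] (1:ℝ), g s < ((l + ε : ℝ) : EReal) := by
      have hlt : liminf g (𝓝[<] (1:ℝ)) < ((l + ε : ℝ) : EReal) := by
        rw [← hLdef, hLl]
        exact_mod_cast (by linarith : l < l + ε)
      exact frequently_lt_of_liminf_lt (by isBoundedDefault) hlt
    apply limsup_le_of_le (by isBoundedDefault)
    filter_upwards [Ioo_mem_nhdsLT_of_mem ⟨hb1, le_refl 1⟩] with r hr
    -- pick s ∈ (r,1) with g s < l + ε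
    obtain ⟨s, hgs, hs⟩ := (hfreq.and_eventually (eventually_mem_set.2
        (Ioo_mem_nhdsLT_of_mem (⟨hr.2, le_refl 1⟩ : (1:ℝ) ∈ Set.Ioc r 1)))).exists
    have hr0 : 0 < r := lt_of_le_of_lt (le_max_right b' 0) hr.1
    have hs0 : 0 < s := hr0.trans hs.1
    set t : ℝ := r / s with ht
    have ht1 : t < 1 := (div_lt_one hs0).2 hs.1
    have htr : r < t := by
      rw [ht, lt_div_iff₀ hs0]
      nlinarith [hs.2]
    have hts : t * s = r := div_mul_cancel₀ r hs0.ne'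
    have ht0 : 0 < t := hr0.trans htr
    -- the point v = s•u+(1-s)•u₀ lies in D
    set v : X := s • u + (1 - s) • u₀ with hv
    have hvD : v ∈ D := hmemD s ⟨hs0, hs.2⟩
    have hfv_top : f v ≠ ⊤ := (hD hvD).ne
    have hfv_bot : f v ≠ ⊥ := hbot v
    set gs : ℝ := (f v).toReal with hgsr
    have hfv : f v = (gs : EReal) := (EReal.coe_toReal hfv_top hfv_bot).symm
    have hgs1 : (gs : ℝ) < l + ε := by
      have h := hgs
      rw [show g s = f v from rfl, hfv] at h
      exact_mod_cast h
    have hgs0 : m ≤ gs := by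
      have := hm v hvD
      rw [hfv] at this
      exact_mod_cast this
    -- the rewriting of the point
    have hpt : t • v + (1 - t) • u₀ = r • u + (1 - r) • u₀ := by
      rw [hv, ← hts]
      module
    -- the modulus bound at t applied to v
    have hmod : (f (t • v + (1 - t) • u₀) - f v) / ((a + |(f v).toReal| : ℝ) : EReal)
        ≤ ruModulus f D u₀ a t := by
      apply le_trans (le_refl _)
      exact le_iSup₂ (f := fun w (_ : w ∈ D) =>
        (f (t • w + (1 - t) • u₀) - f w) / ((a + |(f w).toReal| : ℝ) : EReal)) v hvD
    have htmem : t ∈ Set.Ioo b' 1 :=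
      ⟨lt_of_le_of_lt (le_max_left b' 0) (hr.1.trans htr), ht1⟩
    have hΔt : ruModulus f D u₀ a t < (ε : EReal) := hb'sub htmem
    have hc_pos : (0 : EReal) < ((a + |(f v).toReal| : ℝ) : EReal) := by
      exact_mod_cast (by positivity : (0:ℝ) < a + |(f v).toReal|)
    have hdivle : (f (t • v + (1 - t) • u₀) - f v) / ((a + |(f v).toReal| : ℝ) : EReal)
        ≤ (ε : EReal) := le_trans hmod hΔt.le
    have hmul := (EReal.div_le_iff_le_mul hc_pos (EReal.coe_ne_top _)).1 hdivle
    -- f(r-point) ≤ c * ε + gs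
    have hsub : f (t • v + (1 - t) • u₀) ≤ (((a + |gs|) * ε + gs : ℝ) : EReal) := by
      rw [hfv] at hmul
      have hmul' : f (t • v + (1 - t) • u₀) - (gs : EReal) ≤ (((a + |gs|) * ε : ℝ) : EReal) :=
        le_trans hmul (le_of_eq (by norm_cast))
      have := (EReal.sub_le_iff_le_add (Or.inl (EReal.coe_ne_bot gs))
        (Or.inl (EReal.coe_ne_top gs))).1 hmul'
      refine le_trans this (le_of_eq ?_)
      norm_cast
    have hreal : (a + |gs|) * ε + gs ≤ C * ε + l + ε := by
      have habs : |gs| ≤ |m| + |l| + 1 := by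
        rw [abs_le]
        constructor
        · nlinarith [neg_abs_le m, abs_nonneg l]
        · nlinarith [le_abs_self l, abs_nonneg m]
      nlinarith [abs_nonneg gs]
    calc g r = f (t • v + (1 - t) • u₀) := by rw [hpt]
      _ ≤ (((a + |gs|) * ε + gs : ℝ) : EReal) := hsub
      _ ≤ ((C * ε + l + ε : ℝ) : EReal) := by exact_mod_cast hreal
  -- conclude M ≤ L
  have hML : M ≤ L := by
    rw [hLl]
    by_contra hcon
    push_neg at hcon
    obtain ⟨x, hx1, hx2⟩ := EReal.exists_between_coe_real hcon
    have hx : l < x := by exact_mod_cast hx1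
    set ε : ℝ := min 1 ((x - l) / (C + 1)) with hε
    have hεpos : 0 < ε := lt_min zero_lt_one (div_pos (by linarith) hCpos)
    have hbound := key ε hεpos (min_le_left _ _)
    have : C * ε + l + ε ≤ x := by
      have h1 : ε ≤ (x - l) / (C + 1) := min_le_right _ _
      have h2 : ε * (C + 1) ≤ x - l := by
        rw [← le_div_iff₀ hCpos]; exact h1
      nlinarith [abs_nonneg m, abs_nonneg l, ha.le]
    have : M ≤ (x : EReal) := le_trans hbound (by exact_mod_cast this)
    exact absurd (lt_of_le_of_lt this hx2) (lt_irrefl _)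
  exact le_antisymm hLM (hML.trans_eq rfl)
end

section
/- Let X be a Hausdorff topological vector space, D ⊆ dom f strongly star-shaped relative to u₀ ∈ D, and f : X → (-∞,∞] ru-usc in D relative to u₀ with inf_D f > -∞. Then the radial extension f̂_{u₀}(u) := lim_{t→1⁻} f(tu+(1-t)u₀) is ru-usc in (closure D) ∩ dom f̂_{u₀} relative to u₀, with the same constant a; more precisely Δ^a_{f̂_{u₀}, closure D ∩ dom f̂_{u₀}, u₀}(t) ≤ Δ^a_{f,D,u₀}(t) for all t ∈ [0,1). -/
open Filter Topology

/-- Theorem 3.1(ii), second part: the radial extension is ru-usc in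
`closure D ∩ dom f̂_{u₀}` relative to `u₀`, with the same constant. -/
theorem radialExt_ruusc {X : Type*} [AddCommGroup X] [Module ℝ X]
    [TopologicalSpace X] [T2Space X] [IsTopologicalAddGroup X] [ContinuousSMul ℝ X]
    (f : X → EReal) (hbot : ∀ u, f u ≠ ⊥) (D : Set X) (hD : D ⊆ {u | f u < ⊤})
    (u₀ : X) (hu₀ : u₀ ∈ D)
    (hstar : ∀ t ∈ Set.Ico (0:ℝ) 1, ∀ u ∈ closure D, t • u + (1 - t) • u₀ ∈ D)
    (hinf : ∃ m : ℝ, ∀ u ∈ D, (m : EReal) ≤ f u)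
    (a : ℝ) (ha : 0 < a) (hru : limsup (ruModulus f D u₀ a) (𝓝[<] (1:ℝ)) ≤ 0) :
    (∀ t ∈ Set.Ico (0:ℝ) 1,
      ruModulus (radialExt f u₀) (closure D ∩ {u | radialExt f u₀ u < ⊤}) u₀ a t ≤
        ruModulus f D u₀ a t) ∧
    limsup (ruModulus (radialExt f u₀) (closure D ∩ {u | radialExt f u₀ u < ⊤}) u₀ a)
      (𝓝[<] (1:ℝ)) ≤ 0 := by
  obtain ⟨m, hm⟩ := hinf
  have hIoo : Set.Ioo (0:ℝ) 1 ∈ 𝓝[<] (1:ℝ) := Ioo_mem_nhdsLT zero_lt_one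
  have hIooE : ∀ᶠ s in 𝓝[<] (1:ℝ), s ∈ Set.Ioo (0:ℝ) 1 :=
    eventually_of_mem hIoo fun _ h => h
  have hreal : ∀ w ∈ D, ((f w).toReal : EReal) = f w := fun w hw =>
    EReal.coe_toReal (hD hw).ne (hbot w)
  have main : ∀ t ∈ Set.Ico (0:ℝ) 1,
      ruModulus (radialExt f u₀) (closure D ∩ {u | radialExt f u₀ u < ⊤}) u₀ a t ≤
        ruModulus f D u₀ a t := by
    intro t ht
    set Δ : EReal := ruModulus f D u₀ a t with hΔdef
    have hΔ0 : (0:EReal) ≤ Δ := by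
      have h0 : t • u₀ + (1 - t) • u₀ = u₀ := by module
      have hz : (f (t • u₀ + (1 - t) • u₀) - f u₀) / ((a + |(f u₀).toReal| : ℝ) : EReal)
          = 0 := by
        rw [h0]
        have : f u₀ - f u₀ = 0 := by
          rw [← hreal u₀ hu₀, ← EReal.coe_sub, sub_self, EReal.coe_zero]
        rw [this, EReal.zero_div]
      exact hz.symm.trans_le
        (le_iSup₂ (f := fun w (_ : w ∈ D) =>
          (f (t • w + (1 - t) • u₀) - f w) / ((a + |(f w).toReal| : ℝ) : EReal)) u₀ hu₀)
    rcases eq_top_or_lt_top Δ with hΔtop | hΔlt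
    · rw [hΔtop]; exact le_top
    set c := Δ.toReal with hcdef
    have hΔbot : Δ ≠ ⊥ := fun h => by simp [h] at hΔ0
    have hc0 : (0:ℝ) ≤ c := by
      simpa using EReal.toReal_le_toReal hΔ0 (by simp) hΔlt.ne
    have hΔc : Δ = (c : EReal) := (EReal.coe_toReal hΔlt.ne hΔbot).symm
    simp only [ruModulus]
    refine iSup₂_le fun u hu => ?_
    obtain ⟨huc, hut⟩ := hu
    have hmem : ∀ s ∈ Set.Ioo (0:ℝ) 1, s • u + (1 - s) • u₀ ∈ D := fun s hs =>
      hstar s ⟨hs.1.le, hs.2⟩ u huc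
    set v := t • u + (1 - t) • u₀ with hv
    set L := radialExt f u₀ u with hLdef
    have hL_eq : L = liminf (fun s : ℝ => f (s • u + (1 - s) • u₀)) (𝓝[<] (1:ℝ)) := rfl
    have hLm : (m : EReal) ≤ L := by
      have : (m : EReal) ≤ liminf (fun s : ℝ => f (s • u + (1 - s) • u₀)) (𝓝[<] (1:ℝ)) :=
        le_liminf_of_le (by isBoundedDefault)
          (eventually_of_mem hIoo fun s hs => hm _ (hmem s hs))
      rw [← hL_eq] at this; exact this
    have hLbot : L ≠ ⊥ := fun h => by simp [h] at hLm
    have hLtop : L ≠ ⊤ := hut.ne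
    set Lr := L.toReal with hLrdef
    have hLr : (Lr : EReal) = L := EReal.coe_toReal hLtop hLbot
    -- key pointwise inequality
    have key : ∀ s ∈ Set.Ioo (0:ℝ) 1,
        f ((t*s) • u + (1 - t*s) • u₀) ≤
          (((f (s • u + (1 - s) • u₀)).toReal
            + c * (a + |(f (s • u + (1 - s) • u₀)).toReal|) : ℝ) : EReal) := by
      intro s hs
      set w := s • u + (1 - s) • u₀ with hw
      have hwD : w ∈ D := hmem s hs
      set y := (f w).toReal with hy
      have hterm : (f (t • w + (1 - t) • u₀) - f w) / ((a + |y| : ℝ) : EReal) ≤ Δ :=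
        le_iSup₂ (f := fun w (_ : w ∈ D) =>
          (f (t • w + (1 - t) • u₀) - f w) / ((a + |(f w).toReal| : ℝ) : EReal)) w hwD
      have hd0 : (0:EReal) < ((a + |y| : ℝ) : EReal) := by
        exact_mod_cast (by positivity : (0:ℝ) < a + |y|)
      rw [EReal.div_le_iff_le_mul hd0 (EReal.coe_ne_top _), hΔc,
        EReal.sub_le_iff_le_add (Or.inl (hbot w)) (Or.inl (hD hwD).ne)] at hterm
      have harg : t • w + (1 - t) • u₀ = (t*s) • u + (1 - t*s) • u₀ := by
        rw [hw]; module
      rw [harg] at hterm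
      refine hterm.trans (le_of_eq ?_)
      rw [← hreal w hwD, ← hy]
      norm_cast
      ring
    have hVeq : radialExt f u₀ v
        = liminf (fun s : ℝ => f ((t*s) • u + (1 - t*s) • u₀)) (𝓝[<] (1:ℝ)) := by
      have harg : ∀ s : ℝ, s • v + (1 - s) • u₀ = (t*s) • u + (1 - t*s) • u₀ := by
        intro s; rw [hv]; module
      exact liminf_congr (Eventually.of_forall fun s => by rw [harg s])
    set R : ℝ := Lr + c * (a + |Lr|) with hR
    have hV : radialExt f u₀ v ≤ (R : EReal) := by
      by_contra hcon
      push_neg at hcon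
      obtain ⟨z, hz1, hz2⟩ := EReal.exists_between_coe_real hcon
      have hzR : R < z := by exact_mod_cast hz1
      set ε := z - R with hε
      have hε0 : (0:ℝ) < ε := by simp [hε]; linarith
      set δ := ε / (1 + c) with hδ
      have h1c : (0:ℝ) < 1 + c := by linarith
      have hδ0 : (0:ℝ) < δ := div_pos hε0 h1c
      have hδε : δ * (1 + c) = ε := div_mul_cancel₀ _ h1c.ne'
      have h1 : ∀ᶠ s in 𝓝[<] (1:ℝ),
          ((Lr - δ : ℝ) : EReal) < f (s • u + (1 - s) • u₀) :=
        eventually_lt_of_lt_liminf (by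
          rw [← hL_eq, ← hLr]
          exact_mod_cast sub_lt_self Lr hδ0)
      have h2 : ∃ᶠ s in 𝓝[<] (1:ℝ),
          f (s • u + (1 - s) • u₀) < ((Lr + δ : ℝ) : EReal) :=
        frequently_lt_of_liminf_lt (by isBoundedDefault) (by
          rw [← hL_eq, ← hLr]
          exact_mod_cast lt_add_of_pos_right Lr hδ0)
      have hfreq : ∃ᶠ s in 𝓝[<] (1:ℝ),
          f ((t*s) • u + (1 - t*s) • u₀) ≤ (z : EReal) := by
        refine (h2.and_eventually (h1.and hIooE)).mono ?_
        rintro s ⟨hs2, hs1, hs3⟩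
        have hwD := hmem s hs3
        set y := (f (s • u + (1 - s) • u₀)).toReal with hy
        rw [← hreal _ hwD, ← hy] at hs1 hs2
        have hy1 : Lr - δ < y := by exact_mod_cast hs1
        have hy2 : y < Lr + δ := by exact_mod_cast hs2
        refine (key s hs3).trans ?_
        rw [← hy]
        have habs : |y| ≤ |Lr| + δ :=
          abs_le.2 ⟨by linarith [neg_abs_le Lr], by linarith [le_abs_self Lr]⟩
        have h4 : c * |y| ≤ c * (|Lr| + δ) := mul_le_mul_of_nonneg_left habs hc0
        exact_mod_cast (by linarith : y + c * (a + |y|) ≤ z)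
      have hVz : radialExt f u₀ v ≤ (z : EReal) := by
        rw [hVeq]; exact liminf_le_of_frequently_le hfreq
      exact hz2.not_ge hVz
    have hd0 : (0:EReal) < ((a + |Lr| : ℝ) : EReal) := by
      exact_mod_cast (by positivity : (0:ℝ) < a + |Lr|)
    rw [EReal.div_le_iff_le_mul hd0 (EReal.coe_ne_top _),
      EReal.sub_le_iff_le_add (Or.inl hLbot) (Or.inl hLtop)]
    refine hV.trans (le_of_eq ?_)
    rw [hΔc, ← hLr]
    norm_cast
    rw [hR]; ring
  refine ⟨main, le_trans (limsup_le_limsup ?_) hru⟩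
  exact eventually_of_mem hIoo fun t ht => main t ⟨ht.1.le, ht.2⟩
end

section
/- Let f, g : X → (-∞,∞] be ru-usc in D ⊆ dom f ∩ dom g relative to u₀ ∈ D. If inf_D f > -∞ and inf_D g > -∞, then f + g is ru-usc in D relative to u₀. -/
open Filter Topology

theorem ruusc_add {X : Type*} [AddCommGroup X] [Module ℝ X]
    (f g : X → EReal) (hfbot : ∀ u, f u ≠ ⊥) (hgbot : ∀ u, g u ≠ ⊥)
    (D : Set X) (hD : D ⊆ {u | f u < ⊤} ∩ {u | g u < ⊤}) (u₀ : X) (hu₀ : u₀ ∈ D)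
    (hruf : RuUsc f D u₀) (hrug : RuUsc g D u₀)
    (hinff : ∃ m : ℝ, ∀ u ∈ D, (m : EReal) ≤ f u)
    (hinfg : ∃ m : ℝ, ∀ u ∈ D, (m : EReal) ≤ g u) :
    RuUsc (fun u => f u + g u) D u₀ := by
  obtain ⟨af, haf, hf⟩ := hruf
  obtain ⟨ag, hag, hg⟩ := hrug
  obtain ⟨mf, hmf⟩ := hinff
  obtain ⟨mg, hmg⟩ := hinfg
  set a : ℝ := af + ag + |mf| + |mg| with ha_def
  have ha : 0 < a := by positivity
  refine ⟨a, ha, ?_⟩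
  -- main step: limsup ≤ c for every positive real c
  have key : ∀ c : ℝ, 0 < c →
      limsup (ruModulus (fun u => f u + g u) D u₀ a) (𝓝[<] (1:ℝ)) ≤ (c : EReal) := by
    intro c hc
    have hcf : limsup (ruModulus f D u₀ af) (𝓝[<] (1:ℝ)) < ((c/2 : ℝ) : EReal) :=
      lt_of_le_of_lt hf (by exact_mod_cast (by positivity : (0:ℝ) < c/2))
    have hcg : limsup (ruModulus g D u₀ ag) (𝓝[<] (1:ℝ)) < ((c/2 : ℝ) : EReal) :=
      lt_of_le_of_lt hg (by exact_mod_cast (by positivity : (0:ℝ) < c/2))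
    have hef := Filter.eventually_lt_of_limsup_lt hcf
    have heg := Filter.eventually_lt_of_limsup_lt hcg
    apply Filter.limsup_le_of_le (by isBoundedDefault)
    filter_upwards [hef, heg] with t htf htg
    rw [ruModulus]
    refine iSup₂_le fun u hu => ?_
    -- notation
    set ut : X := t • u + (1 - t) • u₀ with hut
    have hfu_top : f u ≠ ⊤ := (hD hu).1.ne
    have hgu_top : g u ≠ ⊤ := (hD hu).2.ne
    set x : ℝ := (f u).toReal with hx_def
    set y : ℝ := (g u).toReal with hy_def
    have hfx : f u = (x : EReal) := (EReal.coe_toReal hfu_top (hfbot u)).symm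
    have hgy : g u = (y : EReal) := (EReal.coe_toReal hgu_top (hgbot u)).symm
    have hmx : mf ≤ x := by
      have := hmf u hu; rw [hfx] at this; exact_mod_cast this
    have hmy : mg ≤ y := by
      have := hmg u hu; rw [hgy] at this; exact_mod_cast this
    -- bounds from the moduli
    have hdf : (0:ℝ) < af + |x| := by positivity
    have hdg : (0:ℝ) < ag + |y| := by positivity
    have hDa : (0:ℝ) < a + |x + y| := by positivity
    have hbf : f ut - f u ≤ ((af + |x| : ℝ) : EReal) * ((c/2 : ℝ) : EReal) := by
      have h1 : (f ut - f u) / ((af + |x| : ℝ) : EReal) ≤ ruModulus f D u₀ af t := by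
        rw [ruModulus]
        exact le_iSup₂_of_le u hu le_rfl
      have h2 := h1.trans htf.le
      rwa [EReal.div_le_iff_le_mul (by exact_mod_cast hdf) (EReal.coe_ne_top _)] at h2
    have hbg : g ut - g u ≤ ((ag + |y| : ℝ) : EReal) * ((c/2 : ℝ) : EReal) := by
      have h1 : (g ut - g u) / ((ag + |y| : ℝ) : EReal) ≤ ruModulus g D u₀ ag t := by
        rw [ruModulus]
        exact le_iSup₂_of_le u hu le_rfl
      have h2 := h1.trans htg.le
      rwa [EReal.div_le_iff_le_mul (by exact_mod_cast hdg) (EReal.coe_ne_top _)] at h2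
    -- numerator splitting
    have hsplit : f ut + g ut - (f u + g u) = (f ut - f u) + (g ut - g u) := by
      rw [hfx, hgy, sub_eq_add_neg, sub_eq_add_neg, sub_eq_add_neg,
        ← EReal.coe_add, ← EReal.coe_neg, ← EReal.coe_neg, ← EReal.coe_neg, neg_add]
      rw [EReal.coe_add, add_add_add_comm]
    -- real arithmetic bound
    have habs_x : |x| ≤ |x + y| + |mf| + |mg| := by
      rw [abs_le]
      constructor
      · have h1 : -|mf| ≤ mf := neg_abs_le mf
        have := neg_abs_le (x + y)
        have := abs_nonneg (x + y)
        have := abs_nonneg mg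
        linarith
      · have h1 : y ≥ -|mg| := le_trans (neg_abs_le mg) hmy
        have h2 : x + y ≤ |x + y| := le_abs_self (x + y)
        have := abs_nonneg mf
        linarith
    have habs_y : |y| ≤ |x + y| + |mf| + |mg| := by
      rw [abs_le]
      constructor
      · have h1 : -|mg| ≤ mg := neg_abs_le mg
        have := neg_abs_le (x + y)
        have := abs_nonneg (x + y)
        have := abs_nonneg mf
        linarith
      · have h1 : x ≥ -|mf| := le_trans (neg_abs_le mf) hmx
        have h2 : x + y ≤ |x + y| := le_abs_self (x + y)
        have := abs_nonneg mg
        linarith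
    have hreal : (af + |x|) * (c/2) + (ag + |y|) * (c/2) ≤ (a + |x + y|) * c := by
      nlinarith [mul_le_mul_of_nonneg_right habs_x (by positivity : (0:ℝ) ≤ c/2),
        mul_le_mul_of_nonneg_right habs_y (by positivity : (0:ℝ) ≤ c/2)]
    -- combine
    have hnum : f ut + g ut - (f u + g u) ≤ ((a + |x + y| : ℝ) : EReal) * (c : EReal) := by
      rw [hsplit]
      calc (f ut - f u) + (g ut - g u)
          ≤ ((af + |x| : ℝ) : EReal) * ((c/2 : ℝ) : EReal)
            + ((ag + |y| : ℝ) : EReal) * ((c/2 : ℝ) : EReal) := add_le_add hbf hbg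
        _ = (((af + |x|) * (c/2) + (ag + |y|) * (c/2) : ℝ) : EReal) := by
            rw [← EReal.coe_mul, ← EReal.coe_mul, ← EReal.coe_add]
        _ ≤ (((a + |x + y|) * c : ℝ) : EReal) := by exact_mod_cast hreal
        _ = ((a + |x + y| : ℝ) : EReal) * (c : EReal) := EReal.coe_mul _ _
    have htoReal : (f u + g u).toReal = x + y := by
      rw [hfx, hgy, ← EReal.coe_add, EReal.toReal_coe]
    show (f ut + g ut - (f u + g u)) / ((a + |(f u + g u).toReal| : ℝ) : EReal) ≤ (c : EReal)
    rw [htoReal, EReal.div_le_iff_le_mul (by exact_mod_cast hDa) (EReal.coe_ne_top _)]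
    exact hnum
  -- conclude limsup ≤ 0
  by_contra hcon
  push_neg at hcon
  obtain ⟨r, hr0, hrl⟩ := EReal.exists_between_coe_real hcon
  have hr : (0:ℝ) < r := by exact_mod_cast hr0
  exact absurd (key r hr) (not_le.mpr hrl)
end

section
/- Let f, g : X → (-∞,∞] be ru-usc in D ⊆ dom f ∩ dom g relative to u₀ ∈ D. If g is bounded on D (sup_{u∈D} |g(u)| < ∞), then f + g is ru-usc in D relative to u₀. -/
open Filter Topology

/-- Division by a larger positive real is smaller, for nonnegative numerators. -/
lemma ediv_anti {x : EReal} (hx : 0 ≤ x) {d d' : ℝ} (h0 : 0 < d') (hdd : d' ≤ d) :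
    x / (d : EReal) ≤ x / (d' : EReal) := by
  change x * (d : EReal)⁻¹ ≤ x * (d' : EReal)⁻¹
  rw [mul_comm, mul_comm x]
  refine mul_le_mul_of_nonneg_right ?_ hx
  rw [← EReal.coe_inv, ← EReal.coe_inv]
  exact_mod_cast one_div d ▸ one_div d' ▸ one_div_le_one_div_of_le h0 hdd

lemma esub_add_esub (x y : EReal) (hx : x ≠ ⊥) (hy : y ≠ ⊥) (c e : ℝ) :
    (x + y) - ((c + e : ℝ) : EReal) ≤ (x - (c : EReal)) + (y - (e : EReal)) := by
  have hyc : y - (e : EReal) ≠ ⊥ := by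
    cases y with
    | bot => exact absurd rfl hy
    | top => simp [EReal.top_sub_coe]
    | coe r => rw [← EReal.coe_sub]; exact EReal.coe_ne_bot _
  have hxc : x - (c : EReal) ≠ ⊥ := by
    cases x with
    | bot => exact absurd rfl hx
    | top => simp [EReal.top_sub_coe]
    | coe r => rw [← EReal.coe_sub]; exact EReal.coe_ne_bot _
  cases x with
  | bot => exact absurd rfl hx
  | top =>
    rw [EReal.top_sub_coe c, EReal.top_add_of_ne_bot hyc]
    exact le_top
  | coe r =>
    cases y with
    | bot => exact absurd rfl hy
    | top =>
      rw [EReal.top_sub_coe e, EReal.add_top_of_ne_bot hxc]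
      exact le_top
    | coe s =>
      rw [← EReal.coe_add, ← EReal.coe_sub, ← EReal.coe_sub, ← EReal.coe_sub, ← EReal.coe_add]
      exact_mod_cast le_of_eq (by ring)

theorem ruusc_add_bounded {X : Type*} [AddCommGroup X] [Module ℝ X]
    (f g : X → EReal) (hfbot : ∀ u, f u ≠ ⊥) (hgbot : ∀ u, g u ≠ ⊥)
    (D : Set X) (hD : D ⊆ {u | f u < ⊤} ∩ {u | g u < ⊤}) (u₀ : X) (hu₀ : u₀ ∈ D)
    (hruf : RuUsc f D u₀) (hrug : RuUsc g D u₀)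
    (hbdd : ∃ M : ℝ, ∀ u ∈ D, |(g u).toReal| ≤ M) :
    RuUsc (fun u => f u + g u) D u₀ := by
  obtain ⟨af, haf, hf⟩ := hruf
  obtain ⟨ag, hag, hg⟩ := hrug
  obtain ⟨M, hM⟩ := hbdd
  have hM0 : 0 ≤ M := le_trans (abs_nonneg _) (hM u₀ hu₀)
  set a : ℝ := max af ag + M with ha_def
  have ha : 0 < a := by positivity
  refine ⟨a, ha, ?_⟩
  set Δf := ruModulus f D u₀ af
  set Δg := ruModulus g D u₀ ag
  -- pointwise bound
  have hkey : ∀ t : ℝ, ruModulus (fun u => f u + g u) D u₀ a t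
      ≤ max (Δf t) 0 + max (Δg t) 0 := by
    intro t
    refine iSup₂_le fun u hu => ?_
    obtain ⟨hfu, hgu⟩ := hD hu
    set v := t • u + (1 - t) • u₀ with hv
    set c := (f u).toReal with hc
    set e := (g u).toReal with he
    have hfuc : f u = (c : EReal) := (EReal.coe_toReal (ne_of_lt hfu) (hfbot u)).symm
    have hgue : g u = (e : EReal) := (EReal.coe_toReal (ne_of_lt hgu) (hgbot u)).symm
    have htr : ((f u + g u)).toReal = c + e := by
      rw [hfuc, hgue, ← EReal.coe_add, EReal.toReal_coe]
    have heM : |e| ≤ M := hM u hu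
    have hdf : af + |c| ≤ a + |c + e| := by
      have : |c| ≤ |c + e| + |e| := by
        calc |c| = |(c + e) + (-e)| := by ring_nf
        _ ≤ |c + e| + |(-e)| := abs_add_le _ _
        _ = |c + e| + |e| := by rw [abs_neg]
      have h1 : af ≤ max af ag := le_max_left _ _
      nlinarith
    have hdg : ag + |e| ≤ a + |c + e| := by
      have : |e| ≤ |c + e| + |c| := by
        calc |e| = |(c + e) + (-c)| := by ring_nf
        _ ≤ |c + e| + |(-c)| := abs_add_le _ _
        _ = |c + e| + |c| := by rw [abs_neg]
      have h1 : ag ≤ max af ag := le_max_right _ _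
      have hcM : |c| ≤ |c + e| + |e| := by
        calc |c| = |(c + e) + (-e)| := by ring_nf
        _ ≤ |c + e| + |(-e)| := abs_add_le _ _
        _ = |c + e| + |e| := by rw [abs_neg]
      nlinarith
    have hdf0 : 0 < af + |c| := by positivity
    have hdg0 : 0 < ag + |e| := by positivity
    have hdF0 : (0 : EReal) ≤ ((a + |c + e| : ℝ) : EReal) := by
      exact_mod_cast (by positivity : (0:ℝ) ≤ a + |c + e|)
    set A := f v - (c : EReal) with hA
    set B := g v - (e : EReal) with hB
    have hstep1 : (f v + g v) - (f u + g u) ≤ A + B := by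
      rw [hfuc, hgue, ← EReal.coe_add]
      exact esub_add_esub (f v) (g v) (hfbot v) (hgbot v) c e
    have hstep2 : A + B ≤ max A 0 + max B 0 :=
      add_le_add (le_max_left _ _) (le_max_left _ _)
    show ((f v + g v) - (f u + g u)) / ((a + |(f u + g u).toReal| : ℝ) : EReal)
        ≤ max (Δf t) 0 + max (Δg t) 0
    rw [htr]
    calc ((f v + g v) - (f u + g u)) / ((a + |c + e| : ℝ) : EReal)
      _ ≤ (max A 0 + max B 0) / ((a + |c + e| : ℝ) : EReal) :=
          EReal.div_le_div_right_of_nonneg hdF0 (hstep1.trans hstep2)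
      _ = max A 0 / ((a + |c + e| : ℝ) : EReal) + max B 0 / ((a + |c + e| : ℝ) : EReal) :=
          EReal.div_right_distrib_of_nonneg (le_max_right _ _) (le_max_right _ _)
      _ ≤ max A 0 / ((af + |c| : ℝ) : EReal) + max B 0 / ((ag + |e| : ℝ) : EReal) :=
          add_le_add (ediv_anti (le_max_right _ _) hdf0 hdf)
            (ediv_anti (le_max_right _ _) hdg0 hdg)
      _ ≤ max (A / ((af + |c| : ℝ) : EReal)) 0 + max (B / ((ag + |e| : ℝ) : EReal)) 0 := by
          refine add_le_add ?_ ?_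
          · rcases le_total A 0 with h | h
            · rw [max_eq_right h, EReal.zero_div]; exact le_max_right _ _
            · rw [max_eq_left h]; exact le_max_left _ _
          · rcases le_total B 0 with h | h
            · rw [max_eq_right h, EReal.zero_div]; exact le_max_right _ _
            · rw [max_eq_left h]; exact le_max_left _ _
      _ ≤ max (Δf t) 0 + max (Δg t) 0 := by
          refine add_le_add (max_le_max ?_ le_rfl) (max_le_max ?_ le_rfl)
          · have : A / ((af + |c| : ℝ) : EReal)
                = (f (t • u + (1 - t) • u₀) - f u) / ((af + |(f u).toReal| : ℝ) : EReal) := by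
              rw [hA, hfuc, ← hv]; rfl
            rw [this]
            exact le_biSup
              (fun u => (f (t • u + (1 - t) • u₀) - f u) / ((af + |(f u).toReal| : ℝ) : EReal)) hu
          · have : B / ((ag + |e| : ℝ) : EReal)
                = (g (t • u + (1 - t) • u₀) - g u) / ((ag + |(g u).toReal| : ℝ) : EReal) := by
              rw [hB, hgue, ← hv]; rfl
            rw [this]
            exact le_biSup
              (fun u => (g (t • u + (1 - t) • u₀) - g u) / ((ag + |(g u).toReal| : ℝ) : EReal)) hu
  -- limsup of the positive parts vanishes
  have hmax : ∀ (Δ : ℝ → EReal), limsup Δ (𝓝[<] (1:ℝ)) ≤ 0 →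
      limsup (fun t => max (Δ t) 0) (𝓝[<] (1:ℝ)) ≤ 0 := by
    intro Δ hΔ
    refine le_of_forall_gt_imp_ge_of_dense fun ε hε => ?_
    refine limsup_le_of_le (by isBoundedDefault) ?_
    filter_upwards [eventually_lt_of_limsup_lt (lt_of_le_of_lt hΔ hε)] with t ht
    exact max_le ht.le hε.le
  have hnn : ∀ (Δ : ℝ → EReal),
      (0 : EReal) ≤ limsup (fun t => max (Δ t) 0) (𝓝[<] (1:ℝ)) := by
    intro Δ
    exact le_limsup_of_frequently_le
      (Frequently.of_forall fun t => le_max_right _ _)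
  have h1 := hmax Δf hf
  have h2 := hmax Δg hg
  calc limsup (ruModulus (fun u => f u + g u) D u₀ a) (𝓝[<] (1:ℝ))
      ≤ limsup ((fun t => max (Δf t) 0) + fun t => max (Δg t) 0) (𝓝[<] (1:ℝ)) :=
        limsup_le_limsup (Eventually.of_forall hkey)
    _ ≤ limsup (fun t => max (Δf t) 0) (𝓝[<] (1:ℝ))
        + limsup (fun t => max (Δg t) 0) (𝓝[<] (1:ℝ)) :=
        EReal.limsup_add_le (Or.inl (ne_of_gt (lt_of_lt_of_le (by norm_num : (⊥:EReal) < 0) (hnn Δf))))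
          (Or.inr (ne_of_gt (lt_of_lt_of_le (by norm_num : (⊥:EReal) < 0) (hnn Δg))))
    _ ≤ 0 := add_nonpos h1 h2
end

section
/- Let f : X → (-∞,∞] be ru-usc relative to u₀ ∈ dom f (in D = dom f), and g : X → (-∞,∞] ru-usc relative to 0 ∈ dom g. If sup_{v ∈ dom g} |g(v)| < ∞, then the inf-convolution (f ▽ g)(u) := inf_{v∈X} {f(u-v) + g(v)} is ru-usc relative to u₀. -/
open Filter Topology

/-- Proposition 5.5(ii): the inf-convolution of a ru-usc function with a
bounded ru-usc function is ru-usc. -/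
theorem ruusc_infConvolution {X : Type*} [AddCommGroup X] [Module ℝ X]
    (f g : X → EReal) (hfbot : ∀ u, f u ≠ ⊥) (hgbot : ∀ u, g u ≠ ⊥)
    (u₀ : X) (hu₀ : f u₀ < ⊤) (h0 : g 0 < ⊤)
    (hruf : RuUsc f {u | f u < ⊤} u₀) (hrug : RuUsc g {u | g u < ⊤} (0 : X))
    (hbdd : ∃ M : ℝ, ∀ v, g v < ⊤ → |(g v).toReal| ≤ M) :
    RuUsc (fun u => ⨅ v : X, f (u - v) + g v)
      {u | (⨅ v : X, f (u - v) + g v) < ⊤} u₀ := by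
  classical
  obtain ⟨af, haf, hf⟩ := hruf
  obtain ⟨ag, hag, hg⟩ := hrug
  obtain ⟨M₀, hM₀⟩ := hbdd
  set M : ℝ := max M₀ 0 with hMdef
  have hM0 : (0:ℝ) ≤ M := le_max_right _ _
  have hM : ∀ v, g v < ⊤ → |(g v).toReal| ≤ M := fun v hv => (hM₀ v hv).trans (le_max_left _ _)
  refine ⟨af + ag + 2*M + 2, by linarith, ?_⟩
  rw [← EReal.le_of_forall_lt_iff_le]
  intro z hz
  have hz' : (0:ℝ) < z := EReal.coe_pos.mp hz
  set ε : ℝ := min z (1/2) with hεdef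
  have hε0 : (0:ℝ) < ε := lt_min hz' (by norm_num)
  have hε1 : ε ≤ 1/2 := min_le_right _ _
  have hεz : ε ≤ z := min_le_left _ _
  have hfe : ∀ᶠ t in 𝓝[<] (1:ℝ), ruModulus f {u | f u < ⊤} u₀ af t < (ε:EReal) :=
    eventually_lt_of_limsup_lt (lt_of_le_of_lt hf (EReal.coe_pos.mpr hε0))
  have hge : ∀ᶠ t in 𝓝[<] (1:ℝ), ruModulus g {u | g u < ⊤} (0:X) ag t < (ε:EReal) :=
    eventually_lt_of_limsup_lt (lt_of_le_of_lt hg (EReal.coe_pos.mpr hε0))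
  have key : ∀ᶠ t in 𝓝[<] (1:ℝ),
      ruModulus (fun u => ⨅ v : X, f (u - v) + g v)
        {u | (⨅ v : X, f (u - v) + g v) < ⊤} u₀ (af + ag + 2*M + 2) t ≤ (ε:EReal) := by
    filter_upwards [hfe, hge] with t Hf Hg
    rw [ruModulus]
    refine iSup₂_le fun u hu => ?_
    have hu' : (⨅ v : X, f (u - v) + g v) < ⊤ := hu
    rw [EReal.div_le_iff_le_mul
      (EReal.coe_pos.mpr (by
        have := abs_nonneg ((⨅ v : X, f (u - v) + g v).toReal); linarith))
      (EReal.coe_ne_top _)]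
    -- main claim A
    have claimA : ∀ v : X, f (u - v) + g v < ⊤ →
        (⨅ w : X, f (t • u + (1 - t) • u₀ - w) + g w) ≤
          (((f (u - v) + g v).toReal + ε*(af+ag+2*M+|(f (u - v) + g v).toReal|) : ℝ) : EReal) := by
      intro v hv
      have hgvt : g v < ⊤ := by
        rw [lt_top_iff_ne_top]
        intro hc
        rw [hc, EReal.add_top_of_ne_bot (hfbot _)] at hv
        exact absurd hv (lt_irrefl _)
      have hfvt : f (u - v) < ⊤ := by
        rw [lt_top_iff_ne_top]
        intro hc
        rw [hc, EReal.top_add_of_ne_bot (hgbot _)] at hv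
        exact absurd hv (lt_irrefl _)
      -- step 1 : f
      have s1 : f (t • (u - v) + (1 - t) • u₀) - f (u - v)
          ≤ ((af + |(f (u - v)).toReal| : ℝ) : EReal) * (ε:EReal) := by
        rw [← EReal.div_le_iff_le_mul (EReal.coe_pos.mpr (by positivity)) (EReal.coe_ne_top _)]
        refine le_trans ?_ Hf.le
        rw [ruModulus]
        exact le_biSup
          (fun w => (f (t • w + (1 - t) • u₀) - f w) / ((af + |(f w).toReal| : ℝ) : EReal))
          (show (u - v) ∈ {u | f u < ⊤} from hfvt)
      -- step 2 : g
      have s2 : g (t • v + (1 - t) • (0:X)) - g v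
          ≤ ((ag + |(g v).toReal| : ℝ) : EReal) * (ε:EReal) := by
        rw [← EReal.div_le_iff_le_mul (EReal.coe_pos.mpr (by positivity)) (EReal.coe_ne_top _)]
        refine le_trans ?_ Hg.le
        rw [ruModulus]
        exact le_biSup
          (fun w => (g (t • w + (1 - t) • (0:X)) - g w) / ((ag + |(g w).toReal| : ℝ) : EReal))
          (show v ∈ {u | g u < ⊤} from hgvt)
      set p : ℝ := (f (u - v)).toReal with hp
      set q : ℝ := (g v).toReal with hq
      have hpe : ((p:ℝ):EReal) = f (u - v) := EReal.coe_toReal hfvt.ne (hfbot _)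
      have hqe : ((q:ℝ):EReal) = g v := EReal.coe_toReal hgvt.ne (hgbot _)
      have hqM : |q| ≤ M := hM v hgvt
      rw [EReal.sub_le_iff_le_add (Or.inl (hfbot _)) (Or.inl hfvt.ne)] at s1
      rw [← hpe, ← EReal.coe_mul, ← EReal.coe_add] at s1
      have hz0 : t • v + (1 - t) • (0:X) = t • v := by simp
      rw [hz0] at s2
      rw [EReal.sub_le_iff_le_add (Or.inl (hgbot _)) (Or.inl hgvt.ne)] at s2
      rw [← hqe, ← EReal.coe_mul, ← EReal.coe_add] at s2
      -- step 3 : combine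
      have s3 : (⨅ w : X, f (t • u + (1 - t) • u₀ - w) + g w)
          ≤ f (t • u + (1 - t) • u₀ - t • v) + g (t • v) := iInf_le _ _
      have hpt : t • u + (1 - t) • u₀ - t • v = t • (u - v) + (1 - t) • u₀ := by module
      rw [hpt] at s3
      have s4 := add_le_add s1 s2
      rw [← EReal.coe_add] at s4
      refine s3.trans (s4.trans ?_)
      have hσ : (f (u - v) + g v).toReal = p + q := by
        rw [← hpe, ← hqe, ← EReal.coe_add, EReal.toReal_coe]
      rw [hσ, EReal.coe_le_coe_iff]
      have habs : |p| ≤ |p + q| + M := by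
        have h6 : |p| ≤ |p + q| + |q| := by
          calc |p| = |(p + q) + (-q)| := by ring_nf
            _ ≤ |p + q| + |(-q)| := abs_add_le _ _
            _ = |p + q| + |q| := by rw [abs_neg]
        linarith
      nlinarith [mul_le_mul_of_nonneg_left habs hε0.le,
        mul_le_mul_of_nonneg_left hqM hε0.le]
    -- now the two cases on h u
    rcases eq_or_ne (⨅ v : X, f (u - v) + g v) ⊥ with hbot | hne
    · -- degenerate case : h u = ⊥, show h comb = ⊥ as well
      have hcomb : (⨅ w : X, f (t • u + (1 - t) • u₀ - w) + g w) = ⊥ := by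
        rw [EReal.eq_bot_iff_forall_lt]
        intro b
        set c : ℝ := min 0 (2*(b - 1 - ε*(af+ag+2*M))) with hcdef
        have hc0 : c ≤ 0 := min_le_left _ _
        have hc2 : c ≤ 2*(b - 1 - ε*(af+ag+2*M)) := min_le_right _ _
        have hlt : (⨅ v : X, f (u - v) + g v) < (c:EReal) := by
          rw [hbot]; exact EReal.bot_lt_coe c
        obtain ⟨v, hv⟩ := iInf_lt_iff.mp hlt
        have hvt : f (u - v) + g v < ⊤ := hv.trans_le le_top
        have hsb : f (u - v) + g v ≠ ⊥ := by
          rw [Ne, EReal.add_eq_bot_iff]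
          push_neg
          exact ⟨hfbot _, hgbot _⟩
        have hσe : (((f (u - v) + g v).toReal : ℝ) : EReal) = f (u - v) + g v :=
          EReal.coe_toReal hvt.ne hsb
        set σ : ℝ := (f (u - v) + g v).toReal with hσdef
        have hσc : σ < c := by
          rw [← hσe] at hv; exact EReal.coe_lt_coe_iff.mp hv
        refine lt_of_le_of_lt (claimA v hvt) ?_
        rw [EReal.coe_lt_coe_iff]
        have habs : |σ| = -σ := abs_of_neg (hσc.trans_le hc0)
        rw [habs]
        have h7 : σ * (1 - ε) < c * (1 - ε) :=
          mul_lt_mul_of_pos_right hσc (by linarith)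
        have h8 : c * (1 - ε) ≤ c * (1/2) :=
          mul_le_mul_of_nonpos_left (by linarith) hc0
        nlinarith
      rw [hcomb, hbot, EReal.bot_sub]
      exact bot_le
    · -- main case : h u is finite
      have hre : (((⨅ v : X, f (u - v) + g v).toReal : ℝ) : EReal)
          = ⨅ v : X, f (u - v) + g v := EReal.coe_toReal hu'.ne hne
      set r : ℝ := (⨅ v : X, f (u - v) + g v).toReal with hrdef
      have hlt : (⨅ v : X, f (u - v) + g v) < ((r + ε : ℝ) : EReal) := by
        rw [← hre]; exact EReal.coe_lt_coe_iff.mpr (by linarith)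
      obtain ⟨v, hv⟩ := iInf_lt_iff.mp hlt
      have hvt : f (u - v) + g v < ⊤ := hv.trans_le le_top
      have hsb : f (u - v) + g v ≠ ⊥ := by
        rw [Ne, EReal.add_eq_bot_iff]
        push_neg
        exact ⟨hfbot _, hgbot _⟩
      have hσe : (((f (u - v) + g v).toReal : ℝ) : EReal) = f (u - v) + g v :=
        EReal.coe_toReal hvt.ne hsb
      set σ : ℝ := (f (u - v) + g v).toReal with hσdef
      have hσlt : σ < r + ε := by
        rw [← hσe] at hv; exact EReal.coe_lt_coe_iff.mp hv
      have hrσ : r ≤ σ := by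
        have h5 : (⨅ v : X, f (u - v) + g v) ≤ f (u - v) + g v := iInf_le _ _
        rw [← hre, ← hσe] at h5
        exact EReal.coe_le_coe_iff.mp h5
      rw [EReal.sub_le_iff_le_add (Or.inl hne) (Or.inl hu'.ne)]
      refine (claimA v hvt).trans ?_
      rw [← hre, ← EReal.coe_mul, ← EReal.coe_add]
      refine EReal.coe_le_coe_iff.mpr ?_
      have habs : |σ| ≤ |r| + ε :=
        abs_le.mpr ⟨by linarith [neg_abs_le r], by linarith [le_abs_self r]⟩
      nlinarith [mul_le_mul_of_nonneg_left habs hε0.le,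
        mul_le_mul_of_nonneg_left hε1 hε0.le]
  calc limsup (ruModulus (fun u => ⨅ v : X, f (u - v) + g v)
        {u | (⨅ v : X, f (u - v) + g v) < ⊤} u₀ (af + ag + 2*M + 2)) (𝓝[<] (1:ℝ))
      ≤ (ε:EReal) := limsup_le_of_le (h := key)
    _ ≤ (z:EReal) := EReal.coe_le_coe_iff.mpr hεz
end

section
/- Let f : X → (-∞,∞] be ru-usc relative to u₀ ∈ dom f, and C ⊆ X a strongly star-shaped set relative to 0 ∈ C. Then the function u ↦ inf_{v∈C} f(u-v) (the inf-convolution of f with the indicator of C) is ru-usc relative to u₀. -/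
open Filter Topology

/-- Corollary 5.6: the inf-convolution of a ru-usc function with the indicator
of a strongly star-shaped set (relative to 0) is ru-usc. -/
theorem ruusc_infConvolution_indicator {X : Type*} [AddCommGroup X] [Module ℝ X]
    [TopologicalSpace X] [T2Space X] [IsTopologicalAddGroup X] [ContinuousSMul ℝ X]
    (f : X → EReal) (hfbot : ∀ u, f u ≠ ⊥)
    (u₀ : X) (hu₀ : f u₀ < ⊤) (hruf : RuUsc f {u | f u < ⊤} u₀)
    (C : Set X) (h0C : (0 : X) ∈ C)
    (hstar : ∀ t ∈ Set.Ico (0:ℝ) 1, ∀ u ∈ closure C, t • u ∈ C) :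
    RuUsc (fun u => ⨅ v ∈ C, f (u - v))
      {u | (⨅ v ∈ C, f (u - v)) < ⊤} u₀ := by
  classical
  obtain ⟨a, ha, hΔ⟩ := hruf
  refine ⟨a, ha, ?_⟩
  set g : X → EReal := fun u => ⨅ v ∈ C, f (u - v) with hgdef
  -- it suffices to bound the limsup by every positive real ε
  refine le_of_forall_gt_imp_ge_of_dense fun c hc => ?_
  obtain ⟨ε, hε0, hεc⟩ := EReal.exists_between_coe_real hc
  have _hdummy := hεc
  have hε0' : (0:ℝ) < ε := by exact_mod_cast hε0
  refine le_trans ?_ hεc.le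
  set δ : ℝ := min (ε / 2) (1 / 2) with hδdef
  have hδ0 : 0 < δ := lt_min (by linarith) (by norm_num)
  have hδε : δ ≤ ε / 2 := min_le_left _ _
  have hδhalf : δ ≤ 1 / 2 := min_le_right _ _
  have h1 : ∀ᶠ t in 𝓝[<] (1:ℝ), ruModulus f {u | f u < ⊤} u₀ a t < (δ : EReal) :=
    Filter.eventually_lt_of_limsup_lt (lt_of_le_of_lt hΔ (by exact_mod_cast hδ0))
  have h2 : ∀ᶠ t in 𝓝[<] (1:ℝ), t ∈ Set.Ioo (0:ℝ) 1 :=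
    Ioo_mem_nhdsLT_of_mem (by constructor <;> norm_num)
  refine Filter.limsup_le_of_le (by isBoundedDefault) ?_
  filter_upwards [h1, h2] with t hΔt ht
  -- key uniform estimate from ru-usc of f
  have key : ∀ w : X, f w < ⊤ →
      f (t • w + (1 - t) • u₀) ≤ (((a + |(f w).toReal|) * δ + (f w).toReal : ℝ) : EReal) := by
    intro w hw
    set r : ℝ := (f w).toReal with hr
    have hfw : ((r : ℝ) : EReal) = f w := EReal.coe_toReal hw.ne (hfbot w)
    have hdenpos : (0:EReal) < ((a + |r| : ℝ) : EReal) := by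
      exact_mod_cast lt_of_lt_of_le ha (le_add_of_nonneg_right (abs_nonneg _))
    have hterm : (f (t • w + (1 - t) • u₀) - f w) / ((a + |(f w).toReal| : ℝ) : EReal)
        ≤ ruModulus f {u | f u < ⊤} u₀ a t := by
      simp only [ruModulus]
      exact le_iSup₂ (f := fun u (_ : u ∈ {u | f u < ⊤}) =>
        (f (t • u + (1 - t) • u₀) - f u) / ((a + |(f u).toReal| : ℝ) : EReal)) w hw
    have hlt := (lt_of_le_of_lt hterm hΔt).le
    rw [← hr, EReal.div_le_iff_le_mul hdenpos (EReal.coe_ne_top _)] at hlt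
    replace hlt : f (t • w + (1 - t) • u₀) ≤ ((a + |r| : ℝ) : EReal) * (δ:EReal) + f w := by
      rw [← EReal.sub_le_iff_le_add (Or.inl (hfbot w)) (Or.inl hw.ne)]
      exact hlt
    calc f (t • w + (1 - t) • u₀) ≤ ((a + |r| : ℝ) : EReal) * (δ:EReal) + f w := hlt
      _ = (((a + |r|) * δ + r : ℝ) : EReal) := by rw [← hfw]; norm_cast
  -- now bound the modulus of g
  simp only [ruModulus]
  refine iSup₂_le fun u hu => ?_
  have hgu_top : g u < ⊤ := hu
  have hstar' : ∀ v ∈ C, t • v ∈ C := fun v hv =>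
    hstar t ⟨ht.1.le, ht.2⟩ v (subset_closure hv)
  have hvec : ∀ v : X, t • u + (1 - t) • u₀ - t • v = t • (u - v) + (1 - t) • u₀ := by
    intro v; rw [smul_sub]; abel
  have hgtu_le : ∀ v ∈ C, g (t • u + (1 - t) • u₀) ≤ f (t • (u - v) + (1 - t) • u₀) := by
    intro v hv
    have := iInf₂_le (f := fun v (_ : v ∈ C) => f (t • u + (1 - t) • u₀ - v)) (t • v) (hstar' v hv)
    rwa [hvec v] at this
  rcases eq_or_ne (g u) ⊥ with hbot | hne
  · -- case g u = ⊥ : show g at the deformed point is also ⊥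
    have hgtu : g (t • u + (1 - t) • u₀) = ⊥ := by
      rw [EReal.eq_bot_iff_forall_lt]
      intro x
      set y : ℝ := -(2 * (|x| + a + 1)) with hy
      have hy0 : y < 0 := by nlinarith [abs_nonneg x]
      obtain ⟨v, hv, hfv⟩ : ∃ v ∈ C, f (u - v) < ((y:ℝ) : EReal) := by
        have : (⨅ v ∈ C, f (u - v)) < ((y:ℝ) : EReal) := by
          rw [show (⨅ v ∈ C, f (u - v)) = g u from rfl, hbot]; exact EReal.bot_lt_coe y
        obtain ⟨v, hv⟩ := iInf_lt_iff.mp this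
        obtain ⟨hvC, h⟩ := iInf_lt_iff.mp hv
        exact ⟨v, hvC, h⟩
      have hfvtop : f (u - v) < ⊤ := hfv.trans (EReal.coe_lt_top y)
      set c : ℝ := (f (u - v)).toReal with hc
      have hcoe : ((c : ℝ) : EReal) = f (u - v) := EReal.coe_toReal hfvtop.ne (hfbot _)
      have hcy : c < y := by exact_mod_cast hcoe.le.trans_lt hfv
      have hc0 : c < 0 := by nlinarith [abs_nonneg x]
      refine lt_of_le_of_lt ((hgtu_le v hv).trans (key _ hfvtop)) ?_
      rw [← hc, EReal.coe_lt_coe_iff]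
      have habs : |c| = -c := abs_of_neg hc0
      nlinarith [abs_nonneg x, neg_abs_le x]
    have : g (t • u + (1 - t) • u₀) - g u = ⊥ := by rw [hgtu]; exact EReal.bot_sub _
    rw [this]
    refine le_trans (EReal.div_nonpos_of_nonpos_of_nonneg bot_le ?_) (by exact_mod_cast hε0'.le)
    exact_mod_cast (le_add_of_nonneg_right (abs_nonneg _)).trans' ha.le
  · -- case g u finite
    set b : ℝ := (g u).toReal with hb
    have hgu : ((b : ℝ) : EReal) = g u := EReal.coe_toReal hgu_top.ne hne
    set ε' : ℝ := ε * a / 4 with hε'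
    have hε'0 : 0 < ε' := by positivity
    obtain ⟨v, hv, hfv⟩ : ∃ v ∈ C, f (u - v) < (((b + ε' : ℝ)) : EReal) := by
      have : (⨅ v ∈ C, f (u - v)) < ((b + ε' : ℝ) : EReal) := by
        rw [show (⨅ v ∈ C, f (u - v)) = g u from rfl, ← hgu]
        exact_mod_cast lt_add_of_pos_right b hε'0
      obtain ⟨v, hv⟩ := iInf_lt_iff.mp this
      obtain ⟨hvC, h⟩ := iInf_lt_iff.mp hv
      exact ⟨v, hvC, h⟩
    have hfvtop : f (u - v) < ⊤ := hfv.trans (EReal.coe_lt_top _)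
    set c : ℝ := (f (u - v)).toReal with hc
    have hcoe : ((c : ℝ) : EReal) = f (u - v) := EReal.coe_toReal hfvtop.ne (hfbot _)
    have hbc : b ≤ c := by
      have : g u ≤ f (u - v) := iInf₂_le (f := fun v (_ : v ∈ C) => f (u - v)) v hv
      rw [← hgu, ← hcoe] at this; exact_mod_cast this
    have hcb : c < b + ε' := by rw [← EReal.coe_lt_coe_iff, hcoe]; exact hfv
    have habs : |c| ≤ |b| + ε' := by
      rw [abs_le]
      constructor
      · linarith [neg_abs_le b]
      · linarith [le_abs_self b]
    -- the goal
    have hdenpos : (0:EReal) < ((a + |b| : ℝ) : EReal) := by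
      exact_mod_cast lt_of_lt_of_le ha (le_add_of_nonneg_right (abs_nonneg _))
    rw [EReal.div_le_iff_le_mul hdenpos (EReal.coe_ne_top _),
      EReal.sub_le_iff_le_add (Or.inl hne) (Or.inl hgu_top.ne)]
    calc g (t • u + (1 - t) • u₀) ≤ (((a + |c|) * δ + c : ℝ) : EReal) :=
        (hgtu_le v hv).trans (key (u - v) hfvtop)
      _ ≤ ((a + |b| : ℝ) : EReal) * (ε : EReal) + g u := by
        rw [← hgu]
        have : ((a + |b| : ℝ) : EReal) * (ε : EReal) + ((b:ℝ) : EReal)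
            = (((a + |b|) * ε + b : ℝ) : EReal) := by norm_cast
        rw [this, EReal.coe_le_coe_iff]
        nlinarith [abs_nonneg b, abs_nonneg c]
end

section
/- For ε > 0, let S_ε := {ξ ∈ M^{2×2} : ε + det(ξ) > (tr ξ)²}. Then: (i) 0 ∈ S_ε; (ii) for every ξ in the closure of S_ε (i.e. ε + det(ξ) ≥ (tr ξ)²) and every t ∈ [0,1), one has tξ ∈ S_ε; (iii) S_ε is not convex; (iv) S_ε is not bounded; (v) S_ε is rank-one convex, i.e. if ξ, ζ ∈ S_ε with rank(ξ-ζ) ≤ 1 then tξ+(1-t)ζ ∈ S_ε for all t ∈ (0,1). -/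
/-- The set `S_ε = {ξ ∈ M^{2×2} : ε + det ξ > (tr ξ)²}`. -/
def Seps (ε : ℝ) : Set (Matrix (Fin 2) (Fin 2) ℝ) :=
  {ξ | ε + ξ.det > ξ.trace ^ 2}

lemma det_eq_zero_of_rank_le_one (A : Matrix (Fin 2) (Fin 2) ℝ) (h : A.rank ≤ 1) :
    A.det = 0 := by
  by_contra hd
  have hu : IsUnit A := (Matrix.isUnit_iff_isUnit_det A).2 (isUnit_iff_ne_zero.2 hd)
  have := Matrix.rank_of_isUnit A hu
  simp [this] at h

theorem Seps_properties (ε : ℝ) (hε : 0 < ε) :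
    ((0 : Matrix (Fin 2) (Fin 2) ℝ) ∈ Seps ε) ∧
    (∀ ξ : Matrix (Fin 2) (Fin 2) ℝ, ε + ξ.det ≥ ξ.trace ^ 2 →
      ∀ t ∈ Set.Ico (0:ℝ) 1, t • ξ ∈ Seps ε) ∧
    ¬ Convex ℝ (Seps ε) ∧
    (¬ ∃ R : ℝ, ∀ ξ ∈ Seps ε, ∀ i j, |ξ i j| ≤ R) ∧
    (∀ ξ ∈ Seps ε, ∀ ζ ∈ Seps ε, (ξ - ζ).rank ≤ 1 →
      ∀ t ∈ Set.Ioo (0:ℝ) 1, t • ξ + (1 - t) • ζ ∈ Seps ε) := by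
  refine ⟨?_, ?_, ?_, ?_, ?_⟩
  · simp [Seps, hε]
  · intro ξ hξ t ⟨ht0, ht1⟩
    simp only [Seps, Set.mem_setOf_eq] at *
    rw [Matrix.det_smul, Matrix.trace_smul]
    have ht2 : t ^ 2 < 1 := by nlinarith
    simp only [smul_eq_mul, Fintype.card_fin]
    have : t ^ 2 * (ε + ξ.det) ≥ t ^ 2 * ξ.trace ^ 2 := by nlinarith [sq_nonneg t]
    nlinarith [sq_nonneg t]
  · intro hconv
    set a : ℝ := 2 * Real.sqrt ε with ha
    have ha2 : a ^ 2 = 4 * ε := by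
      rw [ha, mul_pow, Real.sq_sqrt hε.le]; ring
    set ξ : Matrix (Fin 2) (Fin 2) ℝ := Matrix.of ![![0, a], ![0, 0]] with hxi
    set ζ : Matrix (Fin 2) (Fin 2) ℝ := Matrix.of ![![0, 0], ![a, 0]] with hze
    have hξ : ξ ∈ Seps ε := by
      simp [Seps, Matrix.det_fin_two, Matrix.trace_fin_two, hxi, hε]
    have hζ : ζ ∈ Seps ε := by
      simp [Seps, Matrix.det_fin_two, Matrix.trace_fin_two, hze, hε]
    have hm := hconv hξ hζ (by norm_num : (0:ℝ) ≤ 1/2) (by norm_num : (0:ℝ) ≤ 1/2)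
      (by norm_num)
    simp only [Seps, Set.mem_setOf_eq, Matrix.det_fin_two, Matrix.trace_fin_two] at hm
    simp only [hxi, hze, Matrix.add_apply, Matrix.smul_apply, Matrix.of_apply] at hm
    norm_num [Matrix.cons_val_zero, Matrix.cons_val_one, Matrix.head_cons] at hm
    nlinarith
  · rintro ⟨R, hR⟩
    set a : ℝ := |R| + 1 with ha
    set ξ : Matrix (Fin 2) (Fin 2) ℝ := Matrix.of ![![0, a], ![0, 0]] with hxi
    have hξ : ξ ∈ Seps ε := by
      simp [Seps, Matrix.det_fin_two, Matrix.trace_fin_two, hxi, hε]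
    have := hR ξ hξ 0 1
    simp only [hxi, Matrix.of_apply] at this
    norm_num [Matrix.cons_val_zero, Matrix.cons_val_one, Matrix.head_cons] at this
    have h1 : |a| = a := abs_of_pos (by positivity)
    rw [h1] at this
    have : |R| + 1 ≤ |R| := le_trans this (le_abs_self R)
    linarith
  · intro ξ hξ ζ hζ hrank t ⟨ht0, ht1⟩
    have hd : (ξ - ζ).det = 0 := det_eq_zero_of_rank_le_one _ hrank
    simp only [Seps, Set.mem_setOf_eq] at *
    rw [Matrix.det_fin_two, Matrix.trace_fin_two] at *
    simp only [Matrix.sub_apply, Matrix.add_apply, Matrix.smul_apply, smul_eq_mul] at *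
    nlinarith [mul_pos ht0 (by linarith : (0:ℝ) < 1 - t), sq_nonneg (ξ 0 0 + ξ 1 1 - ζ 0 0 - ζ 1 1), mul_pos ht0 (sub_pos.2 ht1)]
end

section
/- Let Ω ⊂ ℝ^d be a bounded open set, p ∈ (1,∞), and L : M^{m×d} → [0,∞) a continuous integrand satisfying the local Lipschitz estimate |L(ξ) - L(ζ)| ≤ C'|ξ-ζ|(1+|ξ|^{p-1}+|ζ|^{p-1}) and the coercivity c|ξ|^p ≤ L(ξ) for some c, C' > 0. Define J(u) := ∫_Ω L(∇u(x)) dx on W^{1,p}(Ω;ℝ^m). Then for every u ∈ W^{1,p}(Ω;ℝ^m) with J(u) < ∞ and every t ∈ [0,1), |J(tu) - J(u)| ≤ 4C' max{1, 1/c}(1-t)(|Ω| + J(u)). In particular J is ru-usc relative to 0 with constant a = |Ω|. -/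
open Filter Topology MeasureTheory

/-- Lemma 6.4: the integral functional `J(u) = ∫_Ω L(∇u)` associated with a
quasiconvex integrand of `p`-polynomial growth is ru-usc relative to `0`, with
constant `a = |Ω|`.  Since only the gradient field matters, we state it for an
arbitrary (gradient) field `V : α → E`, so that `J(tu)` corresponds to the
integral of `L (t • V x)`. -/
theorem integral_functional_ruusc {α : Type*} [MeasurableSpace α] (μ : Measure α)
    (Ω : Set α) (hΩ : MeasurableSet Ω) (hΩfin : μ Ω < ⊤)
    {E : Type*} [NormedAddCommGroup E] [NormedSpace ℝ E]
    (p : ℝ) (hp : 1 < p) (L : E → ℝ) (hLcont : Continuous L) (hLnonneg : ∀ ξ, 0 ≤ L ξ)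
    (c C' : ℝ) (hc : 0 < c) (hC' : 0 < C')
    (hLip : ∀ ξ ζ : E, |L ξ - L ζ| ≤ C' * ‖ξ - ζ‖ * (1 + ‖ξ‖ ^ (p - 1) + ‖ζ‖ ^ (p - 1)))
    (hcoer : ∀ ξ : E, c * ‖ξ‖ ^ p ≤ L ξ) :
    (∀ V : α → E, AEStronglyMeasurable V (μ.restrict Ω) →
      IntegrableOn (fun x => L (V x)) Ω μ →
      ∀ t ∈ Set.Ico (0:ℝ) 1,
        |(∫ x in Ω, L (t • V x) ∂μ) - ∫ x in Ω, L (V x) ∂μ| ≤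
          4 * C' * max 1 (1 / c) * (1 - t) * ((μ Ω).toReal + ∫ x in Ω, L (V x) ∂μ)) ∧
    limsup (fun t : ℝ =>
        ⨆ V : {V : α → E // AEStronglyMeasurable V (μ.restrict Ω) ∧
            IntegrableOn (fun x => L (V x)) Ω μ},
          ((((∫ x in Ω, L (t • V.1 x) ∂μ) - ∫ x in Ω, L (V.1 x) ∂μ) /
            ((μ Ω).toReal + |∫ x in Ω, L (V.1 x) ∂μ|) : ℝ) : EReal))
      (𝓝[<] (1:ℝ)) ≤ 0 := by
  have hp1 : (0:ℝ) < p - 1 := by linarith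
  -- pointwise key estimate
  have key : ∀ t : ℝ, t ∈ Set.Ico (0:ℝ) 1 → ∀ v : E,
      |L (t • v) - L v| ≤ C' * (1 - t) * (1 + (3 / c) * L v) := by
    intro t ht v
    obtain ⟨ht0, ht1⟩ := ht
    have hnv : (0:ℝ) ≤ ‖v‖ := norm_nonneg v
    have h1 : ‖t • v - v‖ = (1 - t) * ‖v‖ := by
      rw [show t • v - v = (t - 1) • v by module, norm_smul, Real.norm_eq_abs,
        abs_of_nonpos (by linarith : t - 1 ≤ 0)]
      ring
    have h2 : ‖t • v‖ ≤ ‖v‖ := by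
      rw [norm_smul, Real.norm_eq_abs, abs_of_nonneg ht0]
      nlinarith
    have h3 : ‖t • v‖ ^ (p - 1) ≤ ‖v‖ ^ (p - 1) :=
      Real.rpow_le_rpow (norm_nonneg _) h2 hp1.le
    have hsplit : ‖v‖ * ‖v‖ ^ (p - 1) = ‖v‖ ^ p := by
      have h := Real.rpow_add' hnv (show (1:ℝ) + (p - 1) ≠ 0 by linarith)
      rw [Real.rpow_one] at h
      rw [← h]
      congr 1
      ring
    have hle1 : ‖v‖ ≤ 1 + ‖v‖ ^ p := by
      rcases le_or_gt ‖v‖ 1 with h | h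
      · have := Real.rpow_nonneg hnv p
        linarith
      · have h' : ‖v‖ ^ (1:ℝ) ≤ ‖v‖ ^ p := Real.rpow_le_rpow_of_exponent_le h.le (by linarith)
        rw [Real.rpow_one] at h'
        have := Real.rpow_nonneg hnv p
        linarith
    have hcoer' : ‖v‖ ^ p ≤ L v / c := (le_div_iff₀ hc).2 (by linarith [hcoer v])
    have hlip := hLip (t • v) v
    rw [h1] at hlip
    have hb : C' * ((1 - t) * ‖v‖) * (1 + ‖t • v‖ ^ (p - 1) + ‖v‖ ^ (p - 1)) ≤
        C' * (1 - t) * (1 + (3 / c) * L v) := by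
      have hppos : (0:ℝ) ≤ ‖v‖ ^ (p - 1) := Real.rpow_nonneg hnv _
      have hppos' : (0:ℝ) ≤ ‖t • v‖ ^ (p - 1) := Real.rpow_nonneg (norm_nonneg _) _
      have hstep : ‖v‖ * (1 + ‖t • v‖ ^ (p - 1) + ‖v‖ ^ (p - 1)) ≤ 1 + (3 / c) * L v := by
        have e1 : ‖v‖ * (1 + ‖t • v‖ ^ (p - 1) + ‖v‖ ^ (p - 1)) ≤
            ‖v‖ * (1 + 2 * ‖v‖ ^ (p - 1)) := by nlinarith
        have e2 : ‖v‖ * (1 + 2 * ‖v‖ ^ (p - 1)) = ‖v‖ + 2 * ‖v‖ ^ p := by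
          rw [mul_add, mul_one, ← hsplit]; ring
        have e3 : (3 : ℝ) * (‖v‖ ^ p) ≤ (3 / c) * L v := by
          rw [div_mul_eq_mul_div, le_div_iff₀ hc]
          nlinarith [hcoer v]
        linarith
      calc C' * ((1 - t) * ‖v‖) * (1 + ‖t • v‖ ^ (p - 1) + ‖v‖ ^ (p - 1))
          = C' * (1 - t) * (‖v‖ * (1 + ‖t • v‖ ^ (p - 1) + ‖v‖ ^ (p - 1))) := by ring
        _ ≤ C' * (1 - t) * (1 + (3 / c) * L v) := by
            apply mul_le_mul_of_nonneg_left hstep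
            nlinarith
    linarith
  set M : ℝ := 4 * C' * max 1 (1 / c) with hM
  have hM1 : (1:ℝ) ≤ max 1 (1 / c) := le_max_left _ _
  have hMc : 1 / c ≤ max 1 (1 / c) := le_max_right _ _
  have hMpos : 0 < M := by positivity
  have main : ∀ V : α → E, AEStronglyMeasurable V (μ.restrict Ω) →
      IntegrableOn (fun x => L (V x)) Ω μ →
      ∀ t ∈ Set.Ico (0:ℝ) 1,
        |(∫ x in Ω, L (t • V x) ∂μ) - ∫ x in Ω, L (V x) ∂μ| ≤
          4 * C' * max 1 (1 / c) * (1 - t) * ((μ Ω).toReal + ∫ x in Ω, L (V x) ∂μ) := by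
    intro V hV hint t ht
    obtain ⟨ht0, ht1⟩ := ht
    have h1t : (0:ℝ) ≤ 1 - t := by linarith
    have hkey : ∀ x, |L (t • V x) - L (V x)| ≤ C' * (1 - t) * (1 + (3 / c) * L (V x)) :=
      fun x => key t ⟨ht0, ht1⟩ (V x)
    have hgmeas : AEStronglyMeasurable (fun x => L (t • V x)) (μ.restrict Ω) :=
      hLcont.comp_aestronglyMeasurable (hV.const_smul t)
    have h1int : IntegrableOn (fun _ : α => (1:ℝ)) Ω μ := integrableOn_const hΩfin.ne
    have hbint : IntegrableOn (fun x => C' * (1 - t) * (1 + (3 / c) * L (V x))) Ω μ := by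
      exact ((h1int.add (hint.const_mul (3 / c))).const_mul (C' * (1 - t)))
    have hgint : IntegrableOn (fun x => L (t • V x)) Ω μ := by
      refine Integrable.mono' (hint.add hbint) hgmeas (Filter.Eventually.of_forall fun x => ?_)
      rw [Real.norm_eq_abs, abs_of_nonneg (hLnonneg _)]
      have := hkey x
      have habs : L (t • V x) - L (V x) ≤ |L (t • V x) - L (V x)| := le_abs_self _
      simp only [Pi.add_apply]
      linarith
    have hdint : IntegrableOn (fun x => |L (t • V x) - L (V x)|) Ω μ := (hgint.sub hint).abs
    have hJnn : 0 ≤ ∫ x in Ω, L (V x) ∂μ := integral_nonneg fun x => hLnonneg _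
    have hAnn : 0 ≤ (μ Ω).toReal := ENNReal.toReal_nonneg
    calc |(∫ x in Ω, L (t • V x) ∂μ) - ∫ x in Ω, L (V x) ∂μ|
        = |∫ x in Ω, (L (t • V x) - L (V x)) ∂μ| := by rw [integral_sub hgint hint]
      _ ≤ ∫ x in Ω, |L (t • V x) - L (V x)| ∂μ := by
          simpa [Real.norm_eq_abs] using
            norm_integral_le_integral_norm (μ := μ.restrict Ω)
              (f := fun x => L (t • V x) - L (V x))
      _ ≤ ∫ x in Ω, C' * (1 - t) * (1 + (3 / c) * L (V x)) ∂μ :=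
          integral_mono hdint hbint fun x => hkey x
      _ = C' * (1 - t) * ((μ Ω).toReal + (3 / c) * ∫ x in Ω, L (V x) ∂μ) := by
          rw [integral_const_mul, integral_add h1int (hint.const_mul (3 / c)),
            integral_const_mul, setIntegral_const]
          simp [smul_eq_mul, Measure.real]
      _ ≤ 4 * C' * max 1 (1 / c) * (1 - t) * ((μ Ω).toReal + ∫ x in Ω, L (V x) ∂μ) := by
          have h3c : (3 / c) ≤ 3 * max 1 (1 / c) := by
            rw [div_eq_mul_one_div]; nlinarith
          nlinarith [mul_nonneg (mul_nonneg hC'.le h1t) hAnn,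
            mul_nonneg (mul_nonneg hC'.le h1t) hJnn,
            mul_nonneg (mul_nonneg (mul_nonneg hC'.le h1t) hJnn) (by linarith : (0:ℝ) ≤ max 1 (1/c) - 1/c)]
  refine ⟨main, ?_⟩
  have hsup : ∀ᶠ t in 𝓝[<] (1:ℝ),
      (⨆ V : {V : α → E // AEStronglyMeasurable V (μ.restrict Ω) ∧
            IntegrableOn (fun x => L (V x)) Ω μ},
          ((((∫ x in Ω, L (t • V.1 x) ∂μ) - ∫ x in Ω, L (V.1 x) ∂μ) /
            ((μ Ω).toReal + |∫ x in Ω, L (V.1 x) ∂μ|) : ℝ) : EReal)) ≤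
        ((M * (1 - t) : ℝ) : EReal) := by
    filter_upwards [Ioo_mem_nhdsLT_of_mem (⟨zero_lt_one, le_refl (1:ℝ)⟩ : (1:ℝ) ∈ Set.Ioc 0 1)]
      with t ht
    refine iSup_le fun W => ?_
    obtain ⟨V, hV, hint⟩ := W
    rw [EReal.coe_le_coe_iff]
    show (∫ x in Ω, L (t • V x) ∂μ - ∫ x in Ω, L (V x) ∂μ) /
        ((μ Ω).toReal + |∫ x in Ω, L (V x) ∂μ|) ≤ M * (1 - t)
    have ht' : t ∈ Set.Ico (0:ℝ) 1 := ⟨ht.1.le, ht.2⟩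
    have h1t : (0:ℝ) ≤ 1 - t := by linarith [ht.2]
    have hJnn : 0 ≤ ∫ x in Ω, L (V x) ∂μ := integral_nonneg fun x => hLnonneg _
    have habsJ : |∫ x in Ω, L (V x) ∂μ| = ∫ x in Ω, L (V x) ∂μ := abs_of_nonneg hJnn
    have hb := main V hV hint t ht'
    rw [habsJ]
    rcases eq_or_lt_of_le (add_nonneg ENNReal.toReal_nonneg hJnn :
        (0:ℝ) ≤ (μ Ω).toReal + ∫ x in Ω, L (V x) ∂μ) with hD0 | hDpos
    · rw [← hD0, div_zero]
      positivity
    · rw [div_le_iff₀ hDpos]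
      calc (∫ x in Ω, L (t • V x) ∂μ) - ∫ x in Ω, L (V x) ∂μ
          ≤ |(∫ x in Ω, L (t • V x) ∂μ) - ∫ x in Ω, L (V x) ∂μ| := le_abs_self _
        _ ≤ 4 * C' * max 1 (1 / c) * (1 - t) * ((μ Ω).toReal + ∫ x in Ω, L (V x) ∂μ) := hb
        _ = M * (1 - t) * ((μ Ω).toReal + ∫ x in Ω, L (V x) ∂μ) := by rw [hM]
  have hlim : Tendsto (fun t : ℝ => ((M * (1 - t) : ℝ) : EReal)) (𝓝[<] (1:ℝ)) (𝓝 (0:EReal)) := by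
    have h1 : Tendsto (fun t : ℝ => M * (1 - t)) (𝓝[<] (1:ℝ)) (𝓝 0) := by
      have h2 : Tendsto (fun t : ℝ => M * (1 - t)) (𝓝 (1:ℝ)) (𝓝 (M * (1 - 1))) :=
        (continuous_const.mul (continuous_const.sub continuous_id)).tendsto 1
      simpa using h2.mono_left nhdsWithin_le_nhds
    simpa [Function.comp_def] using (continuous_coe_real_ereal.tendsto 0).comp h1
  calc limsup _ (𝓝[<] (1:ℝ)) ≤ limsup (fun t : ℝ => ((M * (1 - t) : ℝ) : EReal)) (𝓝[<] (1:ℝ)) :=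
        limsup_le_limsup hsup
    _ = ((0:ℝ) : EReal) := by rw [hlim.limsup_eq]; simp
    _ ≤ 0 := by simp
end

section
/- Let X be a Hausdorff topological vector space, D ⊆ dom f strongly star-shaped relative to u₀ ∈ D with closure(D) ⊆ dom f, and f : X → (-∞,∞] ru-usc in closure(D) relative to u₀. If the lower semicontinuous envelope of f + χ_D equals f on D, then inf_D f = inf_{closure D} f. -/
open Filter Topology
open scoped Classical

/-- Corollary 4.6: minimization with strongly star-shaped constraints. -/
theorem inf_eq_inf_closure {X : Type*} [AddCommGroup X] [Module ℝ X]
    [TopologicalSpace X] [T2Space X] [IsTopologicalAddGroup X] [ContinuousSMul ℝ X]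
    (f : X → EReal) (hbot : ∀ u, f u ≠ ⊥) (D : Set X)
    (hDcl : closure D ⊆ {u | f u < ⊤}) (u₀ : X) (hu₀ : u₀ ∈ D)
    (hstar : ∀ t ∈ Set.Ico (0:ℝ) 1, ∀ u ∈ closure D, t • u + (1 - t) • u₀ ∈ D)
    (hru : RuUsc f (closure D) u₀)
    (hlsc : ∀ u ∈ D, lscEnv (fun v => if v ∈ D then f v else ⊤) u = f u) :
    ⨅ u ∈ D, f u = ⨅ u ∈ closure D, f u := by
  refine le_antisymm ?_ (le_iInf₂ fun u hu => iInf₂_le u (subset_closure hu))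
  refine le_iInf₂ fun u hu => ?_
  obtain ⟨a, ha, hlim⟩ := hru
  set m : EReal := ⨅ u ∈ D, f u with hm
  -- f u is a real number
  have hfu_top : f u ≠ ⊤ := (hDcl hu).ne
  have hfu_bot : f u ≠ ⊥ := hbot u
  set y : ℝ := (f u).toReal with hy
  have hfy : f u = (y : EReal) := (EReal.coe_toReal hfu_top hfu_bot).symm
  set c : ℝ := a + |y| with hc
  have hcpos : 0 < c := by positivity
  -- key step: for every ε > 0, m ≤ y + ε * c
  have key : ∀ ε : ℝ, 0 < ε → m ≤ ((y + ε * c : ℝ) : EReal) := by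
    intro ε hε
    have hev1 : ∀ᶠ t in 𝓝[<] (1:ℝ), ruModulus f (closure D) u₀ a t < (ε : EReal) := by
      refine eventually_lt_of_limsup_lt (lt_of_le_of_lt hlim ?_)
      exact_mod_cast hε
    have hev2 : ∀ᶠ t in 𝓝[<] (1:ℝ), (0:ℝ) < t :=
      eventually_nhdsWithin_of_eventually_nhds (eventually_gt_nhds one_pos)
    have hev3 : ∀ᶠ t in 𝓝[<] (1:ℝ), t < 1 :=
      eventually_mem_nhdsWithin
    obtain ⟨t, hΔ, ht0, ht1⟩ := (hev1.and (hev2.and hev3)).exists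
    have htIco : t ∈ Set.Ico (0:ℝ) 1 := ⟨le_of_lt ht0, ht1⟩
    set v : X := t • u + (1 - t) • u₀ with hv
    have hvD : v ∈ D := hstar t htIco u hu
    have hfv_top : f v ≠ ⊤ := (hDcl (subset_closure hvD)).ne
    have hfv_bot : f v ≠ ⊥ := hbot v
    set x : ℝ := (f v).toReal with hx
    have hfx : f v = (x : EReal) := (EReal.coe_toReal hfv_top hfv_bot).symm
    -- the modulus bounds the quotient
    have hterm : ((((x - y) / c : ℝ)) : EReal) ≤ ruModulus f (closure D) u₀ a t := by
      have := le_iSup₂ (f := fun (w : X) (_ : w ∈ closure D) =>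
        (f (t • w + (1 - t) • u₀) - f w) / ((a + |(f w).toReal| : ℝ) : EReal)) u hu
      refine le_trans (le_of_eq ?_) this
      rw [EReal.coe_div, EReal.coe_sub, ← hfx, ← hfy, ← hy, ← hv]
    have hq : ((x - y) / c : ℝ) < ε := by
      have := lt_of_le_of_lt hterm hΔ
      exact_mod_cast this
    have hxle : x ≤ y + ε * c := by
      have := (div_lt_iff₀ hcpos).mp hq
      nlinarith
    calc m ≤ f v := iInf₂_le v hvD
    _ = (x : EReal) := hfx
    _ ≤ ((y + ε * c : ℝ) : EReal) := by exact_mod_cast hxle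
  -- take ε → 0⁺
  rw [hfy]
  have htend : Filter.Tendsto (fun ε : ℝ => ((y + ε * c : ℝ) : EReal)) (𝓝[>] (0:ℝ))
      (𝓝 ((y : EReal))) := by
    have h1 : Filter.Tendsto (fun ε : ℝ => y + ε * c) (𝓝[>] (0:ℝ)) (𝓝 y) := by
      have : Filter.Tendsto (fun ε : ℝ => y + ε * c) (𝓝 (0:ℝ)) (𝓝 (y + 0 * c)) := by
        exact (tendsto_id.mul_const c).const_add y
      simpa using this.mono_left nhdsWithin_le_nhds
    exact (continuous_coe_real_ereal.tendsto y).comp h1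
  exact ge_of_tendsto htend (eventually_mem_nhdsWithin.mono fun ε hε => key ε hε)
end
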